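/- arXiv:2305.05096 — 4 statements merged into one kernel-verified Lean document; each statement's English description precedes it below -/
import Mathlib

section
/- For every integer n ≥ 2, the number f(n) of partitions of n that have a fixed point equals Σ_{m≥1} M(m,n), the number of partitions of n with positive crank. -/
/-- `l` is a partition of `n`: a nonincreasing list of positive integers summing to `n`. -/
noncomputable def IsPartitionOf (n : ℕ) (l : List ℕ) : Prop :=
  l.Pairwise (· ≥ ·) ∧ (∀ x ∈ l, 0 < x) ∧ l.sum = n

/-- The partition `l` has a `k`-fixed point: `λ_i = i + k` for some (1-indexed) index `i`. -/
noncomputable def HasKFixedPoint (k : ℤ) (l : List ℕ) : Prop :=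
  ∃ i : Fin l.length, (l.get i : ℤ) = (i.val : ℤ) + 1 + k

/-- `f_k(n)`: the number of partitions of `n` with a `k`-fixed point. -/
noncomputable def fk (k : ℤ) (n : ℕ) : ℕ :=
  {l : List ℕ | IsPartitionOf n l ∧ HasKFixedPoint k l}.ncard

/-- `g_k(n)`: the number of partitions of `n` without a `k`-fixed point. -/
noncomputable def gk (k : ℤ) (n : ℕ) : ℕ :=
  {l : List ℕ | IsPartitionOf n l ∧ ¬ HasKFixedPoint k l}.ncard

/-- `mex_j(l)`: the smallest integer greater than `j` that is not a part of `l`. -/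
noncomputable def mexJ (j : ℕ) (l : List ℕ) : ℕ := sInf {m : ℕ | j < m ∧ m ∉ l}

/-- Dyson's crank of a partition. -/
noncomputable def crank (l : List ℕ) : ℤ :=
  if l.count 1 = 0 then (l.headI : ℤ)
  else ((l.filter (fun x => l.count 1 < x)).length : ℤ) - (l.count 1 : ℤ)

/-- `M(m,n)`: the number of partitions of `n` with crank `m`. -/
noncomputable def M (m : ℤ) (n : ℕ) : ℕ :=
  {l : List ℕ | IsPartitionOf n l ∧ crank l = m}.ncard

/-- `p(n)`: the number of partitions of `n`. -/
noncomputable def partitionCount (n : ℕ) : ℕ := {l : List ℕ | IsPartitionOf n l}.ncard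

/-- `p(n,j)`: the number of partitions of `n` into at most `j` parts. -/
noncomputable def pAtMost (n : ℕ) (j : ℤ) : ℕ :=
  {l : List ℕ | IsPartitionOf n l ∧ (l.length : ℤ) ≤ j}.ncard

/-- `g'_{-k}(n)`: partitions of `n` with at least `k` parts and no `-k`-fixed point. -/
noncomputable def gneg (k : ℕ) (n : ℕ) : ℕ :=
  {l : List ℕ | IsPartitionOf n l ∧ k ≤ l.length ∧
    ∀ i : Fin l.length, (l.get i : ℤ) ≠ (i.val : ℤ) + 1 - k}.ncard

/-- `(q;q)_i = ∏_{m=1}^{i} (1 - q^m)` as a formal power series over `ℤ`. -/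
noncomputable def qPoch (i : ℕ) : PowerSeries ℤ :=
  ∏ m ∈ Finset.range i, (1 - PowerSeries.X ^ (m + 1))

/-!
Let `d` be the side of the Durfee square of `λ` and `λ_d = d + t`. A partition has a fixed point
exactly when `t = 0`, the fixed point then being `λ_d = d`. Taking `t` cells off each of the first
`d` parts and appending `d t` parts equal to `1` (`toFixed`) keeps the Durfee square and makes
`λ_d = d`. The crank of `λ` is positive exactly when `λ` has `ω < d` ones; the image then has
`ω + d t` ones after its first `d` parts, so `t` and `ω` are the quotient and remainder of that
number by `d`, which is how `ofFixed` inverts the map. The partition `(1)` has a fixed point but is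
not in the image, which is why `n ≥ 2`.
-/

namespace FixedPointCrank

open List

section ListLemmas

variable {α : Type*} {l : List α}

lemma getElem_mem_take_of_lt {i d : ℕ} (hi : i < d) (h : i < l.length) : l[i] ∈ l.take d :=
  mem_take_iff_getElem.2 ⟨i, by omega, rfl⟩

lemma getElem_mem_drop_of_le {i d : ℕ} (hi : d ≤ i) (h : i < l.length) : l[i] ∈ l.drop d :=
  mem_drop_iff_getElem.2 ⟨i - d, by omega, by simp only [Nat.add_sub_cancel' hi]⟩

lemma pos_of_mem_take {x : α} {d : ℕ} (hx : x ∈ l.take d) : 0 < d :=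
  Nat.pos_of_ne_zero fun h => by simp [h] at hx

lemma getElem_le_getElem_of_le [Preorder α] (hs : l.Pairwise (· ≥ ·)) {i j : ℕ} (hij : i ≤ j)
    (hj : j < l.length) : l[j] ≤ l[i] :=
  hs.rel_get_of_le (a := ⟨i, by omega⟩) (b := ⟨j, hj⟩) hij

lemma getElem_le_of_mem_take [Preorder α] (hs : l.Pairwise (· ≥ ·)) {d : ℕ} {x : α}
    (hd : d - 1 < l.length) (hx : x ∈ l.take d) : l[d - 1] ≤ x := by
  obtain ⟨j, hj, rfl⟩ := mem_take_iff_getElem.1 hx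
  exact getElem_le_getElem_of_le hs (by omega) hd

lemma le_getElem_of_mem_drop [Preorder α] (hs : l.Pairwise (· ≥ ·)) {d : ℕ} {x : α}
    (hd : d < l.length) (hx : x ∈ l.drop d) : x ≤ l[d] := by
  obtain ⟨j, hj, rfl⟩ := mem_drop_iff_getElem.1 hx
  exact getElem_le_getElem_of_le hs (by omega) _

lemma lt_getElem_iff_lt_countP [LinearOrder α] (hs : l.Pairwise (· ≥ ·)) {w : α} {i : ℕ}
    (hi : i < l.length) : w < l[i] ↔ i < l.countP (w < ·) := by
  induction l generalizing i with
  | nil => simp at hi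
  | cons a l ih =>
    by_cases ha : w < a
    · rw [countP_cons_of_pos (by simpa using ha)]
      cases i with
      | zero => simpa using ha
      | succ i => simpa using ih hs.of_cons (by simpa using hi)
    · have hzero : (a :: l).countP (w < ·) = 0 := by
        refine countP_eq_zero.2 fun b hb => ?_
        have hba : b ≤ a := by
          rcases mem_cons.1 hb with rfl | hb
          · exact le_rfl
          · exact rel_of_pairwise_cons hs hb
        simpa using hba.trans (not_lt.1 ha)
      rw [hzero]
      simpa using (getElem_le_getElem_of_le hs (Nat.zero_le i) hi).trans (not_lt.1 ha)

end ListLemmas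

variable {l : List ℕ}

def durfee (l : List ℕ) : ℕ := Nat.findGreatest (fun i => i ≤ l.getD (i - 1) 0) l.length

def excess (l : List ℕ) : ℕ := l.getD (durfee l - 1) 0 - durfee l

lemma durfee_le_length (l : List ℕ) : durfee l ≤ l.length := Nat.findGreatest_le _

lemma getD_durfee_sub_one (l : List ℕ) : l.getD (durfee l - 1) 0 = durfee l + excess l := by
  have : durfee l ≤ l.getD (durfee l - 1) 0 :=
    Nat.findGreatest_spec (P := fun i => i ≤ l.getD (i - 1) 0) (Nat.zero_le _) (Nat.zero_le _)
  rw [excess]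
  omega

lemma getElem_durfee_sub_one (hd : 0 < durfee l) :
    l[durfee l - 1]'(by have := durfee_le_length l; omega) = durfee l + excess l := by
  rw [← getD_durfee_sub_one, getD_eq_getElem]

lemma succ_le_durfee {i : ℕ} (hi : i < l.length) (h : i < l[i]) : i + 1 ≤ durfee l :=
  Nat.le_findGreatest hi (by rw [Nat.add_sub_cancel, getD_eq_getElem _ _ hi]; exact h)

lemma durfee_pos (hp : ∀ x ∈ l, 0 < x) (hl : l ≠ []) : 0 < durfee l := by
  have h0 : 0 < l.length := length_pos_iff.2 hl
  exact succ_le_durfee h0 (hp _ (getElem_mem h0))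

lemma durfee_eq_of_bounds {d : ℕ} (hd : d ≤ l.length) (htake : ∀ x ∈ l.take d, d ≤ x)
    (hdrop : ∀ x ∈ l.drop d, x ≤ d) : durfee l = d := by
  apply le_antisymm
  · by_contra! h
    have hlt : durfee l - 1 < l.length := by have := durfee_le_length l; omega
    have h1 : durfee l ≤ l[durfee l - 1] := by
      have := getD_durfee_sub_one l
      rw [getD_eq_getElem _ _ hlt] at this
      omega
    have h2 := hdrop _ (getElem_mem_drop_of_le (show d ≤ durfee l - 1 by omega) hlt)
    omega
  · rcases Nat.eq_zero_or_pos d with rfl | hd0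
    · exact Nat.zero_le _
    · have hlt : d - 1 < l.length := by omega
      have := htake _ (getElem_mem_take_of_lt (show d - 1 < d by omega) hlt)
      have := succ_le_durfee hlt (by omega)
      omega

lemma durfee_add_excess_le_of_mem_take (hs : l.Pairwise (· ≥ ·)) {x : ℕ}
    (hx : x ∈ l.take (durfee l)) :    durfee l + excess l ≤ x := by
  rw [← getElem_durfee_sub_one (pos_of_mem_take hx)]
  exact getElem_le_of_mem_take hs _ hx

lemma le_durfee_of_mem_drop (hs : l.Pairwise (· ≥ ·)) {x : ℕ} (hx : x ∈ l.drop (durfee l)) :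
    x ≤ durfee l := by
  have hd : durfee l < l.length := by
    have := length_pos_of_mem hx
    rw [length_drop] at this
    omega
  have : l[durfee l] ≤ durfee l := by
    by_contra! h
    have := succ_le_durfee hd h
    omega
  exact (le_getElem_of_mem_drop hs hd hx).trans this

lemma lt_durfee_iff (hs : l.Pairwise (· ≥ ·)) {i : ℕ} (hi : i < l.length) :
    i < durfee l ↔ i < l[i] := by
  refine ⟨fun h => ?_, fun h => succ_le_durfee hi h⟩
  have := durfee_add_excess_le_of_mem_take hs (getElem_mem_take_of_lt (by omega) hi)
  omega

lemma hasKFixedPoint_zero_iff (hs : l.Pairwise (· ≥ ·)) :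
    HasKFixedPoint 0 l ↔ 0 < durfee l ∧ excess l = 0 := by
  constructor
  · rintro ⟨⟨i, hi⟩, hfix⟩
    have hval : l[i] = i + 1 := by
      simp only [get_eq_getElem, add_zero] at hfix
      exact_mod_cast hfix
    have hle : i + 1 ≤ durfee l := succ_le_durfee hi (by omega)
    have := durfee_add_excess_le_of_mem_take hs (getElem_mem_take_of_lt (by omega) hi)
    omega
  · rintro ⟨hd, hex⟩
    refine ⟨⟨durfee l - 1, by have := durfee_le_length l; omega⟩, ?_⟩
    have := getElem_durfee_sub_one hd
    simp only [get_eq_getElem, this, hex]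
    omega

lemma lt_countP_iff_lt_durfee (hs : l.Pairwise (· ≥ ·)) (w : ℕ) :
    w < l.countP (w < ·) ↔ w < durfee l := by
  rcases Nat.lt_or_ge w l.length with hw | hw
  · rw [lt_durfee_iff hs hw, lt_getElem_iff_lt_countP hs hw]
  · have := countP_le_length (p := fun x => decide (w < x)) (l := l)
    have := durfee_le_length l
    omega

lemma one_le_crank_iff (hs : l.Pairwise (· ≥ ·)) (hp : ∀ x ∈ l, 0 < x) (hl : l ≠ []) :
    1 ≤ crank l ↔ l.count 1 < durfee l := by
  rw [crank]
  split_ifs with h0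
  · obtain ⟨a, t, rfl⟩ := exists_cons_of_ne_nil hl
    have := hp a mem_cons_self
    have := durfee_pos hp hl
    simp only [headI]
    omega
  · rw [← countP_eq_length_filter, ← lt_countP_iff_lt_durfee hs]
    omega

lemma filter_one_lt_append_replicate_count_one (hs : l.Pairwise (· ≥ ·))
    (hp : ∀ x ∈ l, 0 < x) :
    l.filter (1 < ·) ++ replicate (l.count 1) 1 = l := by
  induction l with
  | nil => simp
  | cons a l ih =>
    have ha := hp a mem_cons_self
    rcases Nat.lt_or_ge 1 a with ha1 | ha1
    · simp [ha1, (show a ≠ 1 by omega),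
        ih hs.of_cons fun x hx => hp x (mem_cons_of_mem a hx)]
    · obtain rfl : a = 1 := by omega
      have hones : l = replicate l.length 1 := eq_replicate_iff.2 ⟨rfl, fun b hb => by
        have := rel_of_pairwise_cons hs hb
        have := hp b (mem_cons_of_mem 1 hb)
        omega⟩
      rw [hones]
      simp [replicate_succ]

lemma sum_map_sub_add_mul {u : List ℕ} {t : ℕ} (h : ∀ x ∈ u, t ≤ x) :
    (u.map (· - t)).sum + u.length * t = u.sum := by
  induction u with
  | nil => simp
  | cons a u ih =>
    have ha := h a mem_cons_self
    have := ih fun x hx => h x (mem_cons_of_mem a hx)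
    simp only [map_cons, sum_cons, length_cons, Nat.add_mul, Nat.one_mul]
    omega

lemma map_add_map_sub {u : List ℕ} {t : ℕ} (h : ∀ x ∈ u, t ≤ x) :
    (u.map (· - t)).map (· + t) = u := by
  rw [map_map]
  conv_rhs => rw [← map_id u]
  exact map_congr_left fun x hx => by
    have := h x hx
    simp only [Function.comp_apply, id_eq]
    omega

lemma map_sub_map_add (u : List ℕ) (t : ℕ) : (u.map (· + t)).map (· - t) = u := by
  simp [map_map, Function.comp_def]

def toFixed (l : List ℕ) : List ℕ :=
  (l.take (durfee l)).map (· - excess l) ++ l.drop (durfee l) ++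
    replicate (durfee l * excess l) 1

def ofFixed (ν : List ℕ) : List ℕ :=
  (ν.take (durfee ν)).map (· + (ν.drop (durfee ν)).count 1 / durfee ν) ++
    (ν.drop (durfee ν)).filter (1 < ·) ++ replicate ((ν.drop (durfee ν)).count 1 % durfee ν) 1

lemma length_take_durfee (l : List ℕ) : (l.take (durfee l)).length = durfee l := by
  simpa using durfee_le_length l

lemma take_durfee_toFixed :
    (toFixed l).take (durfee l) = (l.take (durfee l)).map (· - excess l) := by
  rw [toFixed, append_assoc, take_left' (by simpa using length_take_durfee l)]

lemma drop_durfee_toFixed :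
    (toFixed l).drop (durfee l) = l.drop (durfee l) ++ replicate (durfee l * excess l) 1 := by
  rw [toFixed, append_assoc, drop_left' (by simpa using length_take_durfee l)]

lemma durfee_le_of_mem_take_toFixed (hs : l.Pairwise (· ≥ ·)) {x : ℕ}
    (hx : x ∈ (toFixed l).take (durfee l)) : durfee l ≤ x := by
  rw [take_durfee_toFixed, mem_map] at hx
  obtain ⟨y, hy, rfl⟩ := hx
  have := durfee_add_excess_le_of_mem_take hs hy
  omega

lemma le_durfee_of_mem_drop_toFixed (hs : l.Pairwise (· ≥ ·)) {x : ℕ}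
    (hx : x ∈ (toFixed l).drop (durfee l)) : x ≤ durfee l := by
  rw [drop_durfee_toFixed, mem_append] at hx
  rcases hx with hx | hx
  · exact le_durfee_of_mem_drop hs hx
  · obtain ⟨hne, rfl⟩ := (mem_replicate.1 hx)
    exact Nat.pos_of_mul_pos_right (Nat.pos_of_ne_zero hne)

lemma pairwise_toFixed (hs : l.Pairwise (· ≥ ·)) (hp : ∀ x ∈ l, 0 < x) :
    (toFixed l).Pairwise (· ≥ ·) := by
  rw [← take_append_drop (durfee l) (toFixed l), pairwise_append]
  refine ⟨?_, ?_, fun a ha b hb => ?_⟩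
  · rw [take_durfee_toFixed]
    exact (hs.sublist (take_sublist _ _)).map _ fun a b hab => Nat.sub_le_sub_right hab _
  · rw [drop_durfee_toFixed, pairwise_append]
    refine ⟨hs.sublist (drop_sublist _ _), pairwise_replicate.2 (Or.inr le_rfl), ?_⟩
    intro a ha b hb
    rw [eq_of_mem_replicate hb]
    exact hp a (mem_of_mem_drop ha)
  · exact (le_durfee_of_mem_drop_toFixed hs hb).trans (durfee_le_of_mem_take_toFixed hs ha)

lemma pos_of_mem_toFixed (hs : l.Pairwise (· ≥ ·)) (hp : ∀ x ∈ l, 0 < x) :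
    ∀ x ∈ toFixed l, 0 < x := by
  intro x hx
  rw [← take_append_drop (durfee l) (toFixed l), mem_append] at hx
  rcases hx with hx | hx
  · exact (pos_of_mem_take hx).trans_le (durfee_le_of_mem_take_toFixed hs hx)
  · rw [drop_durfee_toFixed, mem_append] at hx
    rcases hx with hx | hx
    · exact hp x (mem_of_mem_drop hx)
    · rw [eq_of_mem_replicate hx]; exact Nat.one_pos

lemma sum_toFixed (hs : l.Pairwise (· ≥ ·)) : (toFixed l).sum = l.sum := by
  have h := sum_map_sub_add_mul fun x hx =>
    (durfee_add_excess_le_of_mem_take hs hx).trans' le_add_self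
  rw [length_take_durfee] at h
  rw [toFixed, sum_append, sum_append, sum_replicate, smul_eq_mul, mul_one,
    ← sum_take_add_sum_drop l (durfee l)]
  omega

lemma durfee_toFixed (hs : l.Pairwise (· ≥ ·)) : durfee (toFixed l) = durfee l := by
  apply durfee_eq_of_bounds ?_ (fun x hx => durfee_le_of_mem_take_toFixed hs hx)
    (fun x hx => le_durfee_of_mem_drop_toFixed hs hx)
  have := durfee_le_length l
  simp only [toFixed, length_append, length_map, length_take, length_drop, length_replicate]
  omega

lemma hasKFixedPoint_toFixed (hs : l.Pairwise (· ≥ ·)) (hp : ∀ x ∈ l, 0 < x) (hl : l ≠ []) :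
    HasKFixedPoint 0 (toFixed l) := by
  have hd := durfee_pos hp hl
  rw [hasKFixedPoint_zero_iff (pairwise_toFixed hs hp), durfee_toFixed hs]
  refine ⟨hd, ?_⟩
  have := durfee_le_length l
  have hlt : durfee l - 1 < (toFixed l).length := by
    simp only [toFixed, length_append, length_map, length_take, length_drop, length_replicate]
    omega
  have hfix : (toFixed l)[durfee l - 1] = durfee l := by
    simp only [toFixed, append_assoc]
    rw [getElem_append_left (by simp; omega), getElem_map, getElem_take, getElem_durfee_sub_one hd]
    omega
  rw [excess, durfee_toFixed hs, getD_eq_getElem _ _ hlt, hfix, Nat.sub_self]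

lemma ofFixed_toFixed (hs : l.Pairwise (· ≥ ·)) (hp : ∀ x ∈ l, 0 < x) (h : l.count 1 < durfee l) :
    ofFixed (toFixed l) = l := by
  have hd : 0 < durfee l := by omega
  have hcount : (l.drop (durfee l)).count 1 < durfee l :=
    ((drop_sublist _ _).count_le 1).trans_lt h
  rw [ofFixed, durfee_toFixed hs, take_durfee_toFixed, drop_durfee_toFixed, count_append,
    count_replicate_self, Nat.add_mul_div_left _ _ hd, Nat.div_eq_of_lt hcount, Nat.zero_add,
    map_add_map_sub fun x hx => (durfee_add_excess_le_of_mem_take hs hx).trans' le_add_self,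
    Nat.add_mul_mod_self_left, Nat.mod_eq_of_lt hcount, filter_append,
    (filter_eq_nil_iff (l := replicate _ 1)).2 (by simp +contextual), append_nil, append_assoc,
    filter_one_lt_append_replicate_count_one (hs.sublist (drop_sublist _ _))
      fun x hx => hp x (mem_of_mem_drop hx), take_append_drop]

variable {ν : List ℕ}

lemma take_durfee_ofFixed : (ofFixed ν).take (durfee ν) =
    (ν.take (durfee ν)).map (· + (ν.drop (durfee ν)).count 1 / durfee ν) := by
  rw [ofFixed, append_assoc, take_left' (by simpa using length_take_durfee ν)]

lemma drop_durfee_ofFixed : (ofFixed ν).drop (durfee ν) =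
    (ν.drop (durfee ν)).filter (1 < ·) ++
      replicate ((ν.drop (durfee ν)).count 1 % durfee ν) 1 := by
  rw [ofFixed, append_assoc, drop_left' (by simpa using length_take_durfee ν)]

lemma durfee_le_of_mem_take_ofFixed (hs : ν.Pairwise (· ≥ ·)) {x : ℕ}
    (hx : x ∈ (ofFixed ν).take (durfee ν)) : durfee ν ≤ x := by
  rw [take_durfee_ofFixed, mem_map] at hx
  obtain ⟨y, hy, rfl⟩ := hx
  have := durfee_add_excess_le_of_mem_take hs hy
  exact (le_of_add_le_left this).trans (Nat.le_add_right _ _)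

lemma le_durfee_of_mem_drop_ofFixed (hs : ν.Pairwise (· ≥ ·)) (hd : 0 < durfee ν) {x : ℕ}
    (hx : x ∈ (ofFixed ν).drop (durfee ν)) : x ≤ durfee ν := by
  rw [drop_durfee_ofFixed, mem_append] at hx
  rcases hx with hx | hx
  · exact le_durfee_of_mem_drop hs (mem_of_mem_filter hx)
  · rw [eq_of_mem_replicate hx]
    exact hd

lemma pairwise_ofFixed (hs : ν.Pairwise (· ≥ ·)) (hd : 0 < durfee ν) :
    (ofFixed ν).Pairwise (· ≥ ·) := by
  rw [← take_append_drop (durfee ν) (ofFixed ν), pairwise_append]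
  refine ⟨?_, ?_, fun a ha b hb => ?_⟩
  · rw [take_durfee_ofFixed]
    exact (hs.sublist (take_sublist _ _)).map _ fun a b hab => Nat.add_le_add_right hab _
  · rw [drop_durfee_ofFixed, pairwise_append]
    refine ⟨(hs.sublist (drop_sublist _ _)).filter _, pairwise_replicate.2 (Or.inr le_rfl),
      ?_⟩
    intro a ha b hb
    rw [eq_of_mem_replicate hb]
    exact (by simpa using of_mem_filter ha : 1 < a).le
  · exact (le_durfee_of_mem_drop_ofFixed hs hd hb).trans (durfee_le_of_mem_take_ofFixed hs ha)

lemma pos_of_mem_ofFixed (hs : ν.Pairwise (· ≥ ·)) : ∀ x ∈ ofFixed ν, 0 < x := by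
  intro x hx
  rw [← take_append_drop (durfee ν) (ofFixed ν), mem_append] at hx
  rcases hx with hx | hx
  · exact (pos_of_mem_take hx).trans_le (durfee_le_of_mem_take_ofFixed hs hx)
  · rw [drop_durfee_ofFixed, mem_append] at hx
    rcases hx with hx | hx
    · exact Nat.zero_lt_one.trans (by simpa using of_mem_filter hx)
    · rw [eq_of_mem_replicate hx]; exact Nat.one_pos

lemma durfee_le_length_ofFixed : durfee ν ≤ (ofFixed ν).length := by
  simp only [ofFixed, length_append, length_map, length_take_durfee]
  omega

lemma durfee_ofFixed (hs : ν.Pairwise (· ≥ ·)) (hd : 0 < durfee ν) :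
    durfee (ofFixed ν) = durfee ν :=
  durfee_eq_of_bounds durfee_le_length_ofFixed
    (fun _ hx => durfee_le_of_mem_take_ofFixed hs hx)
    (fun _ hx => le_durfee_of_mem_drop_ofFixed hs hd hx)

lemma excess_ofFixed (hs : ν.Pairwise (· ≥ ·)) (hd : 0 < durfee ν) :
    excess (ofFixed ν) = excess ν + (ν.drop (durfee ν)).count 1 / durfee ν := by
  have := durfee_le_length ν
  have hlt : durfee ν - 1 < (ofFixed ν).length := by
    have := durfee_le_length_ofFixed (ν := ν)
    omega
  have hcorner : (ofFixed ν)[durfee ν - 1] =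
      durfee ν + excess ν + (ν.drop (durfee ν)).count 1 / durfee ν := by
    simp only [ofFixed, append_assoc]
    rw [getElem_append_left (by simp; omega), getElem_map, getElem_take, getElem_durfee_sub_one hd]
  rw [excess, durfee_ofFixed hs hd, getD_eq_getElem _ _ hlt, hcorner, add_assoc,
    Nat.add_sub_cancel_left]

lemma toFixed_ofFixed (hs : ν.Pairwise (· ≥ ·)) (hp : ∀ x ∈ ν, 0 < x)
    (hfix : HasKFixedPoint 0 ν) : toFixed (ofFixed ν) = ν := by
  obtain ⟨hd, hex⟩ := (hasKFixedPoint_zero_iff hs).1 hfix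
  rw [toFixed, durfee_ofFixed hs hd, excess_ofFixed hs hd, hex, Nat.zero_add,
    take_durfee_ofFixed, drop_durfee_ofFixed, map_sub_map_add, append_assoc, append_assoc,
    ← replicate_add, Nat.mod_add_div, filter_one_lt_append_replicate_count_one
      (hs.sublist (drop_sublist _ _)) fun x hx => hp x (mem_of_mem_drop hx), take_append_drop]

lemma eq_singleton_one_of_durfee_eq_one (hs : ν.Pairwise (· ≥ ·)) (hp : ∀ x ∈ ν, 0 < x)
    (hd : durfee ν = 1) (hm : (ν.drop 1).count 1 = 0) (h1 : 1 ∈ ν.take 1) : ν = [1] := by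
  obtain ⟨a, rest, rfl⟩ := exists_cons_of_ne_nil (ne_nil_of_mem (mem_of_mem_take h1))
  have ha : a = 1 := by simpa [eq_comm] using h1
  have hrest : rest = [] := eq_nil_iff_forall_not_mem.2 fun y hy => by
    have hy1 : y ≤ 1 := hd ▸ le_durfee_of_mem_drop hs (by rw [hd]; simpa using hy)
    have hy0 := hp y (mem_cons_of_mem a hy)
    have := count_pos_iff.2 (show 1 ∈ rest by rwa [show y = 1 by omega] at hy)
    simp only [drop_succ_cons, drop_zero] at hm
    omega
  rw [ha, hrest]

lemma count_one_ofFixed_lt_durfee (hs : ν.Pairwise (· ≥ ·)) (hp : ∀ x ∈ ν, 0 < x)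
    (hfix : HasKFixedPoint 0 ν) (hν : ν ≠ [1]) : (ofFixed ν).count 1 < durfee (ofFixed ν) := by
  obtain ⟨hd, -⟩ := (hasKFixedPoint_zero_iff hs).1 hfix
  have hfilter : ((ν.drop (durfee ν)).filter (1 < ·)).count 1 = 0 :=
    count_eq_zero.2 fun h => by simpa using of_mem_filter h
  have htake :
      ((ν.take (durfee ν)).map (· + (ν.drop (durfee ν)).count 1 / durfee ν)).count 1 = 0 := by
    refine count_eq_zero.2 fun h => hν ?_
    obtain ⟨x, hx, hx1⟩ := mem_map.1 h
    generalize ht : (ν.drop (durfee ν)).count 1 / durfee ν = t at hx1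
    have := durfee_add_excess_le_of_mem_take hs hx
    have hd1 : durfee ν = 1 := by omega
    obtain rfl : x = 1 := by omega
    rw [hd1, Nat.div_one, show t = 0 by omega] at ht
    exact eq_singleton_one_of_durfee_eq_one hs hp hd1 ht (hd1 ▸ hx)
  rw [durfee_ofFixed hs hd, ofFixed, count_append, count_append, count_replicate_self, hfilter,
    htake]
  simpa using Nat.mod_lt _ hd

lemma isPartitionOf_toFixed {n : ℕ} (h : IsPartitionOf n l) : IsPartitionOf n (toFixed l) :=
  ⟨pairwise_toFixed h.1 h.2.1, pos_of_mem_toFixed h.1 h.2.1, (sum_toFixed h.1).trans h.2.2⟩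

lemma isPartitionOf_ofFixed {n : ℕ} (h : IsPartitionOf n ν) (hfix : HasKFixedPoint 0 ν) :
    IsPartitionOf n (ofFixed ν) := by
  obtain ⟨hs, hp, hsum⟩ := h
  have hd := ((hasKFixedPoint_zero_iff hs).1 hfix).1
  refine ⟨pairwise_ofFixed hs hd, pos_of_mem_ofFixed hs, ?_⟩
  rw [← sum_toFixed (pairwise_ofFixed hs hd), toFixed_ofFixed hs hp hfix, hsum]

end FixedPointCrank

open FixedPointCrank

theorem stmt1 (n : ℕ) (hn : 2 ≤ n) :
    fk 0 n = {l : List ℕ | IsPartitionOf n l ∧ 1 ≤ crank l}.ncard := by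
  have hne : ∀ {l}, IsPartitionOf n l → l ≠ [] := by
    rintro l ⟨-, -, hsum⟩ rfl
    simp at hsum
    omega
  have hne1 : ∀ {l}, IsPartitionOf n l → l ≠ [1] := by
    rintro l ⟨-, -, hsum⟩ rfl
    simp at hsum
    omega
  refine (Set.InvOn.bijOn (f := toFixed) (f' := ofFixed) ⟨?_, ?_⟩ ?_ ?_).ncard_eq.symm
  · rintro l ⟨h, hc⟩
    exact ofFixed_toFixed h.1 h.2.1 ((one_le_crank_iff h.1 h.2.1 (hne h)).1 hc)
  · rintro ν ⟨h, hfix⟩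
    exact toFixed_ofFixed h.1 h.2.1 hfix
  · rintro l ⟨h, hc⟩
    exact ⟨isPartitionOf_toFixed h, hasKFixedPoint_toFixed h.1 h.2.1 (hne h)⟩
  · rintro ν ⟨h, hfix⟩
    have h' := isPartitionOf_ofFixed h hfix
    exact ⟨h', (one_le_crank_iff h'.1 h'.2.1 (hne h')).2
      (count_one_ofFixed_lt_durfee h.1 h.2.1 hfix (hne1 h))⟩
end

section
/- For every integer n > 2, there are strictly more partitions of n without a fixed point than partitions of n with a fixed point; that is, g(n) > f(n). -/
/-!
A partition has at most one fixed point, because `λ_j - j` is strictly decreasing. Let `λ_k = k`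
be the fixed point. If `λ_{k+1} = k` too, pass to the conjugate `λ'`: the first `k + 1` rows have
length `≥ k`, so `λ'_j ≥ k + 1` for `j ≤ k`, and row `k` has length `k`, so `λ'_j ≤ k - 1` for
`j > k`; hence `λ'_j ∉ {j - 1, j}` for every `j`. Otherwise `λ_{k+1} < k`, and for `n > 1` also
`k ≥ 2`; then move the diagonal cell `(k, k)` of the Young diagram to a new row of length one.
The result `μ` has no fixed point, and `k` is recovered as the unique `j` with `μ_j = j - 1`, which
the conjugates never have. This gives an injection from partitions with a fixed point into those
without; it misses the hook `(n - 1, 1)` for `n > 2`, which has `λ_2 = 1` but only two parts.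
-/

open YoungDiagram

theorem Antitone.eq_of_apply_eq_add {f : ℕ → ℕ} (hf : Antitone f) {c j k : ℕ}
    (hj : f j = j + c) (hk : f k = k + c) : j = k := by
  rcases lt_trichotomy j k with h | h | h
  · have := hf h.le
    omega
  · exact h
  · have := hf h.le
    omega

theorem Set.ncard_lt_ncard_of_injOn {α β : Type*} {s : Set α} {t : Set β} {f : α → β} {b : β}
    (hf : Set.MapsTo f s t) (hinj : Set.InjOn f s) (hb : b ∈ t) (hb' : b ∉ f '' s)
    (ht : t.Finite) : s.ncard < t.ncard := by
  rw [← hinj.ncard_image]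
  exact Set.ncard_lt_ncard ⟨hf.image_subset, fun h => hb' (h hb)⟩ ht

namespace List

theorem lt_length_of_getD_ne {α : Type*} {l : List α} {d : α} {j : ℕ} (h : l.getD j d ≠ d) :
    j < l.length := by
  by_contra hj
  exact h (getD_eq_default _ _ (not_lt.mp hj))

theorem getD_pos_iff {l : List ℕ} (hp : ∀ x ∈ l, 0 < x) {j : ℕ} :
    0 < l.getD j 0 ↔ j < l.length := by
  refine ⟨fun h => lt_length_of_getD_ne h.ne', fun h => ?_⟩
  rw [getD_eq_getElem _ _ h]
  exact hp _ (getElem_mem h)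

theorem pairwise_ge_iff_antitone_getD {l : List ℕ} :
    l.Pairwise (· ≥ ·) ↔ Antitone (l.getD · 0) := by
  constructor
  · intro hs p q hpq
    dsimp only
    rcases lt_or_ge q l.length with hq | hq
    · rw [getD_eq_getElem _ _ hq, getD_eq_getElem _ _ (hpq.trans_lt hq)]
      exact (sortedGE_iff_pairwise.mpr hs).getElem_ge_getElem_of_le hpq
    · rw [getD_eq_default _ _ hq]
      exact Nat.zero_le _
  · intro h
    rw [← isChain_iff_pairwise, isChain_iff_getElem]
    intro i hi
    simpa [getD_eq_getElem, hi, Nat.lt_of_succ_lt hi] using h (Nat.le_succ i)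

end List

namespace YoungDiagram

theorem card_eq_sum_rowLen (μ : YoungDiagram) :
    μ.card = ∑ i ∈ Finset.range (μ.colLen 0), μ.rowLen i := by
  rw [YoungDiagram.card, Finset.card_eq_sum_card_fiberwise (f := Prod.fst)]
  · simp_rw [rowLen_eq_card]
    rfl
  · intro c hc
    rw [Finset.mem_coe, Finset.mem_range, ← mem_iff_lt_colLen]
    exact μ.up_left_mem le_rfl (Nat.zero_le _) hc

theorem sum_rowLens (μ : YoungDiagram) : μ.rowLens.sum = μ.card := by
  simp [rowLens, card_eq_sum_rowLen, Finset.sum, Finset.range, Multiset.range]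

theorem card_transpose (μ : YoungDiagram) : μ.transpose.card = μ.card :=
  Finset.card_map _

theorem card_ofRowLens {w : List ℕ} {hw : w.SortedGE} (hpos : ∀ x ∈ w, 0 < x) :
    (ofRowLens w hw).card = w.sum := by
  rw [← sum_rowLens, rowLens_ofRowLens_eq_self hpos]

theorem getD_rowLens (μ : YoungDiagram) (i : ℕ) : μ.rowLens.getD i 0 = μ.rowLen i := by
  rcases lt_or_ge i (μ.colLen 0) with hi | hi
  · simp [hi]
  · rw [List.getD_eq_default _ _ (by simpa using hi)]
    have : (i, 0) ∉ μ := by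
      rw [mem_iff_lt_colLen]
      omega
    rw [mem_iff_lt_rowLen] at this
    omega

theorem mem_ofRowLens_iff_lt_getD {w : List ℕ} {hw : w.SortedGE} {i j : ℕ} :
    (i, j) ∈ ofRowLens w hw ↔ j < w.getD i 0 := by
  rw [mem_ofRowLens]
  rcases lt_or_ge i w.length with hi | hi
  · simp [hi]
  · simp [hi.not_gt]

end YoungDiagram

section Partition

variable {n : ℕ} {l : List ℕ}

theorem IsPartitionOf.sortedGE (h : IsPartitionOf n l) : l.SortedGE :=
  List.sortedGE_iff_pairwise.mpr h.1

theorem IsPartitionOf.antitone_getD (h : IsPartitionOf n l) : Antitone (l.getD · 0) :=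
  List.pairwise_ge_iff_antitone_getD.mp h.1

theorem IsPartitionOf.getD_one_eq_one (h : IsPartitionOf n l) (hn : 1 < n)
    (h0 : l.getD 0 0 = 1) : l.getD 1 0 = 1 := by
  obtain ⟨hs, hp, hsum⟩ := h
  rcases l with _ | ⟨a, _ | ⟨b, t⟩⟩
  · simp at h0
  · simp_all
  · simp only [List.getD_cons_zero] at h0
    have hb : b ≤ a := List.rel_of_pairwise_cons hs List.mem_cons_self
    have := hp b (by simp)
    simp only [List.getD_cons_succ, List.getD_cons_zero]
    omega

theorem hasKFixedPoint_zero_iff : HasKFixedPoint 0 l ↔ ∃ j, l.getD j 0 = j + 1 := by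
  constructor
  · rintro ⟨⟨j, hj⟩, h⟩
    refine ⟨j, ?_⟩
    rw [List.getD_eq_getElem _ _ hj]
    exact_mod_cast (by simpa using h : (l[j] : ℤ) = j + 1)
  · rintro ⟨j, h⟩
    have hj : j < l.length := List.lt_length_of_getD_ne (d := 0) (by omega)
    refine ⟨⟨j, hj⟩, ?_⟩
    rw [List.getD_eq_getElem _ _ hj] at h
    simp [h]

theorem lt_length_of_getD_eq_succ {i : ℕ} (hi : l.getD i 0 = i + 1) : i < l.length :=
  List.lt_length_of_getD_ne (d := 0) (by omega)

end Partition

theorem finite_setOf_isPartitionOf (n : ℕ) : {l | IsPartitionOf n l}.Finite := by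
  have hinj : Set.InjOn (fun l : List ℕ => (l : Multiset ℕ)) {l | IsPartitionOf n l} :=
    fun l hl l' hl' h => (Multiset.coe_eq_coe.mp h).eq_of_sortedGE hl.sortedGE hl'.sortedGE
  refine .of_finite_image ((Set.finite_range (Nat.Partition.parts (n := n))).subset ?_) hinj
  rintro _ ⟨l, ⟨-, hp, hsum⟩, rfl⟩
  exact ⟨⟨l, fun hx => hp _ hx, hsum⟩, rfl⟩

/-- The `else` branch is junk: only sorted lists have a Young diagram. -/
def conjugatePartition (l : List ℕ) : List ℕ :=
  if h : l.SortedGE then (ofRowLens l h).transpose.rowLens else l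

theorem lt_getD_conjugatePartition_iff {l : List ℕ} (hs : l.SortedGE) {i j : ℕ} :
    i < (conjugatePartition l).getD j 0 ↔ j < l.getD i 0 := by
  rw [conjugatePartition, dif_pos hs, getD_rowLens, rowLen_transpose, ← mem_iff_lt_colLen,
    mem_ofRowLens_iff_lt_getD]

theorem IsPartitionOf.conjugatePartition {n : ℕ} {l : List ℕ} (h : IsPartitionOf n l) :
    IsPartitionOf n (conjugatePartition l) := by
  rw [_root_.conjugatePartition, dif_pos h.sortedGE]
  obtain ⟨-, hp, hsum⟩ := h
  refine ⟨List.sortedGE_iff_pairwise.mp (rowLens_sorted _), pos_of_mem_rowLens _, ?_⟩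
  rw [sum_rowLens, card_transpose, card_ofRowLens hp, hsum]

theorem conjugatePartition_injOn :
    Set.InjOn conjugatePartition {l | l.SortedGE ∧ ∀ x ∈ l, 0 < x} := by
  rintro l ⟨hs, hp⟩ l' ⟨hs', hp'⟩ h
  rw [conjugatePartition, conjugatePartition, dif_pos hs, dif_pos hs'] at h
  have h' := transpose_eq_iff.mp (equivListRowLens.injective (Subtype.ext h))
  rw [← rowLens_ofRowLens_eq_self hp (hw := hs), h', rowLens_ofRowLens_eq_self hp']

theorem getD_conjugatePartition_ne {l : List ℕ} (hs : l.SortedGE) {i : ℕ}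
    (hi : l.getD i 0 = i + 1) (hi' : l.getD (i + 1) 0 = i + 1) (j : ℕ) :
    (conjugatePartition l).getD j 0 ≠ j + 1 ∧ (conjugatePartition l).getD j 0 ≠ j := by
  rcases le_or_gt j i with hj | hj
  · have : i + 1 < (conjugatePartition l).getD j 0 :=
      (lt_getD_conjugatePartition_iff hs).mpr (by omega)
    omega
  · have : ¬ i < (conjugatePartition l).getD j 0 := fun h => by
      have := (lt_getD_conjugatePartition_iff hs).mp h
      omega
    omega

/-- When `l[i] = i + 1`, this moves the cell `(i, i)` (0-based) of the Young diagram to a new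
last row. -/
def moveDiagonalCell (l : List ℕ) (i : ℕ) : List ℕ := l.set i i ++ [1]

section MoveDiagonalCell

variable {n : ℕ} {l : List ℕ} {i : ℕ}

theorem length_moveDiagonalCell : (moveDiagonalCell l i).length = l.length + 1 := by
  simp [moveDiagonalCell]

theorem getD_moveDiagonalCell (hi : i < l.length) (j : ℕ) :
    (moveDiagonalCell l i).getD j 0 =
      if j = i then i else if j = l.length then 1 else l.getD j 0 := by
  rcases lt_trichotomy j l.length with hj | rfl | hj
  · rw [moveDiagonalCell, List.getD_append _ _ _ _ (by simpa using hj), if_neg hj.ne]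
    simp [hj, List.getElem_set, eq_comm]
  · simp [moveDiagonalCell, hi.ne']
  · rw [List.getD_eq_default _ _ (by simp [moveDiagonalCell]; omega),
      List.getD_eq_default _ _ hj.le, if_neg (by omega), if_neg hj.ne']

theorem getD_moveDiagonalCell_self (hi : i < l.length) : (moveDiagonalCell l i).getD i 0 = i := by
  rw [getD_moveDiagonalCell hi, if_pos rfl]

theorem sum_moveDiagonalCell (hi : l.getD i 0 = i + 1) : (moveDiagonalCell l i).sum = l.sum := by
  have hlen := lt_length_of_getD_eq_succ hi
  have hli : l[i] = i + 1 := by rw [← List.getD_eq_getElem _ 0 hlen, hi]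
  conv_rhs => rw [← List.set_getElem_self hlen, hli]
  simp only [moveDiagonalCell, List.sum_append, List.sum_set, hlen, if_true, List.sum_singleton]
  omega

theorem moveDiagonalCell_injOn : Set.InjOn (moveDiagonalCell · i) {l | l.getD i 0 = i + 1} := by
  have hrecover : ∀ l ∈ {l : List ℕ | l.getD i 0 = i + 1},
      (moveDiagonalCell l i).dropLast.set i (i + 1) = l := by
    intro l hl
    have hlen := lt_length_of_getD_eq_succ hl
    have hli : l[i] = i + 1 := by rw [← List.getD_eq_getElem _ 0 hlen, hl]
    rw [moveDiagonalCell, List.dropLast_concat, List.set_set, ← hli, List.set_getElem_self]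
  intro l hl l' hl' h
  rw [← hrecover l hl, ← hrecover l' hl']
  exact congrArg (fun m => m.dropLast.set i (i + 1)) h

theorem IsPartitionOf.moveDiagonalCell (h : IsPartitionOf n l) (hi : l.getD i 0 = i + 1)
    (hi' : l.getD (i + 1) 0 ≤ i) (hi1 : 1 ≤ i) : IsPartitionOf n (moveDiagonalCell l i) := by
  have hlen := lt_length_of_getD_eq_succ hi
  refine ⟨List.pairwise_ge_iff_antitone_getD.mpr (antitone_nat_of_succ_le fun j => ?_),
    fun x hx => ?_, (sum_moveDiagonalCell hi).trans h.2.2⟩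
  · have hanti : l.getD (j + 1) 0 ≤ l.getD j 0 := h.antitone_getD (Nat.le_succ j)
    have hpos : j < l.length → 0 < l.getD j 0 := (List.getD_pos_iff h.2.1).mpr
    have hzero : l.length ≤ j + 1 → l.getD (j + 1) 0 = 0 := List.getD_eq_default _ _
    simp only [getD_moveDiagonalCell hlen]
    split_ifs <;> subst_vars <;> omega
  · rcases List.mem_append.mp hx with hx | hx
    · rcases List.mem_or_eq_of_mem_set hx with hx | rfl
      exacts [h.2.1 x hx, hi1]
    · simp_all

theorem not_hasKFixedPoint_moveDiagonalCell (hl : Antitone (l.getD · 0))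
    (hi : l.getD i 0 = i + 1) : ¬ HasKFixedPoint 0 (moveDiagonalCell l i) := by
  have hlen := lt_length_of_getD_eq_succ hi
  rw [hasKFixedPoint_zero_iff]
  rintro ⟨j, hj⟩
  rw [getD_moveDiagonalCell hlen] at hj
  split_ifs at hj with h1 h2
  · omega
  · omega
  · exact h1 (hl.eq_of_apply_eq_add hj hi)

end MoveDiagonalCell

noncomputable def fixedPointIdx (l : List ℕ) : ℕ := sInf {j | l.getD j 0 = j + 1}

noncomputable def toFixedPointFree (l : List ℕ) : List ℕ :=
  if l.getD (fixedPointIdx l + 1) 0 = fixedPointIdx l + 1 then conjugatePartition l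
  else moveDiagonalCell l (fixedPointIdx l)

section ToFixedPointFree

variable {n : ℕ}

theorem toFixedPointFree_cases {l : List ℕ} (h : IsPartitionOf n l) (hn : 1 < n)
    (hfp : HasKFixedPoint 0 l) : ∃ i, l.getD i 0 = i + 1 ∧
      (l.getD (i + 1) 0 = i + 1 ∧ toFixedPointFree l = conjugatePartition l ∨
        1 ≤ i ∧ l.getD (i + 1) 0 ≤ i ∧ toFixedPointFree l = moveDiagonalCell l i) := by
  have hi : l.getD (fixedPointIdx l) 0 = fixedPointIdx l + 1 :=
    Nat.sInf_mem (hasKFixedPoint_zero_iff.mp hfp)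
  refine ⟨fixedPointIdx l, hi, ?_⟩
  by_cases hA : l.getD (fixedPointIdx l + 1) 0 = fixedPointIdx l + 1
  · exact .inl ⟨hA, if_pos hA⟩
  · have hle : l.getD (fixedPointIdx l + 1) 0 ≤ l.getD (fixedPointIdx l) 0 :=
      h.antitone_getD (Nat.le_succ _)
    have hi1 : fixedPointIdx l ≠ 0 := fun h0 => hA <| by
      rw [h0] at hi ⊢
      exact h.getD_one_eq_one hn hi
    exact .inr ⟨Nat.one_le_iff_ne_zero.mpr hi1, by omega, if_neg hA⟩

theorem mapsTo_toFixedPointFree (hn : 1 < n) :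
    Set.MapsTo toFixedPointFree {l | IsPartitionOf n l ∧ HasKFixedPoint 0 l}
      {l | IsPartitionOf n l ∧ ¬ HasKFixedPoint 0 l} := by
  rintro l ⟨h, hfp⟩
  obtain ⟨i, hi, ⟨hi', heq⟩ | ⟨hi1, hi', heq⟩⟩ := toFixedPointFree_cases h hn hfp <;> rw [heq]
  · refine ⟨h.conjugatePartition, ?_⟩
    rw [hasKFixedPoint_zero_iff]
    rintro ⟨j, hj⟩
    exact (getD_conjugatePartition_ne h.sortedGE hi hi' j).1 hj
  · exact ⟨h.moveDiagonalCell hi hi' hi1, not_hasKFixedPoint_moveDiagonalCell h.antitone_getD hi⟩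

theorem injOn_toFixedPointFree (hn : 1 < n) :
    Set.InjOn toFixedPointFree {l | IsPartitionOf n l ∧ HasKFixedPoint 0 l} := by
  rintro l ⟨h, hfp⟩ l' ⟨h', hfp'⟩ heq
  obtain ⟨i, hi, ⟨hi', hl⟩ | ⟨hi1, hi', hl⟩⟩ := toFixedPointFree_cases h hn hfp <;>
    obtain ⟨i', hj, ⟨hj', hl'⟩ | ⟨hj1, hj', hl'⟩⟩ := toFixedPointFree_cases h' hn hfp' <;>
    rw [hl, hl'] at heq
  · exact conjugatePartition_injOn ⟨h.sortedGE, h.2.1⟩ ⟨h'.sortedGE, h'.2.1⟩ heq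
  · refine ((getD_conjugatePartition_ne h.sortedGE hi hi' i').2 ?_).elim
    rw [heq, getD_moveDiagonalCell_self (lt_length_of_getD_eq_succ hj)]
  · refine ((getD_conjugatePartition_ne h'.sortedGE hj hj' i).2 ?_).elim
    rw [← heq, getD_moveDiagonalCell_self (lt_length_of_getD_eq_succ hi)]
  · obtain rfl : i = i' := (h.moveDiagonalCell hi hi' hi1).antitone_getD.eq_of_apply_eq_add
      (c := 0) (getD_moveDiagonalCell_self (lt_length_of_getD_eq_succ hi))
      (by rw [heq]; exact getD_moveDiagonalCell_self (lt_length_of_getD_eq_succ hj))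
    exact moveDiagonalCell_injOn hi hj heq

theorem hook_notMem_image_toFixedPointFree (hn : 1 < n) :
    [n - 1, 1] ∉ toFixedPointFree '' {l | IsPartitionOf n l ∧ HasKFixedPoint 0 l} := by
  rintro ⟨l, ⟨h, hfp⟩, heq⟩
  obtain ⟨i, hi, ⟨hi', hl⟩ | ⟨hi1, -, hl⟩⟩ := toFixedPointFree_cases h hn hfp <;> rw [hl] at heq
  · exact (getD_conjugatePartition_ne h.sortedGE hi hi' 1).2 (by simp [heq])
  · have hlen := congrArg List.length heq
    rw [length_moveDiagonalCell] at hlen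
    have := lt_length_of_getD_eq_succ hi
    simp only [List.length_cons, List.length_nil] at hlen
    omega

theorem hook_mem_fixedPointFree (hn : 2 < n) :
    IsPartitionOf n [n - 1, 1] ∧ ¬ HasKFixedPoint 0 [n - 1, 1] := by
  refine ⟨⟨by simp; omega, by simp; omega, by simp; omega⟩, ?_⟩
  rw [hasKFixedPoint_zero_iff]
  rintro ⟨_ | _ | j, hj⟩ <;> simp at hj
  omega

end ToFixedPointFree

theorem stmt5 (n : ℕ) (hn : 2 < n) : fk 0 n < gk 0 n :=
  Set.ncard_lt_ncard_of_injOn (mapsTo_toFixedPointFree (by omega))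
    (injOn_toFixedPointFree (by omega)) (hook_mem_fixedPointFree hn)
    (hook_notMem_image_toFixedPointFree (by omega))
    ((finite_setOf_isPartitionOf n).subset fun _ hl => hl.1)
end

section
/- For every integer k ≥ 0, as formal power series in q, Σ_{n≥0} f_k(n) q^n = Σ_{i≥1} q^{i(i+k)} / ((q;q)_{i+k} (q;q)_{i−1}), where the right-hand side converges coefficientwise (the term for index i has lowest degree i(i+k)). -/
/-!
A `k`-fixed point sits at a unique index `i`, because `λ_i - i` strictly decreases along a
partition. A partition with `λ_i = i + k` is `ν + (i + k), i + k, μ`, where `ν` (the first `i - 1`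
parts, lowered by `i + k`) is a partition into at most `i - 1` parts and `μ` (the parts after
`λ_i`) has parts at most `i + k`. This accounts for the weight `i (i + k)` and for the factors
`1/(q;q)_{i-1}` and `1/(q;q)_{i+k}`: both kinds of partitions are counted by a function satisfying
`p_{j+1}(m) = p_j(m) + p_{j+1}(m - j - 1)`, the recurrence of the coefficients of `1/(q;q)_j`.
-/

namespace KFixedPoint

open PowerSeries
open Finset.HasAntidiagonal (antidiagonal mem_antidiagonal)
open scoped Function

theorem ncard_biUnion_prod {α β ι κ : Type*} (s : Finset (ι × κ)) {S : ι → Set α}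
    {T : κ → Set β} (hS : ∀ i, (S i).Finite) (hT : ∀ j, (T j).Finite)
    (hSd : Pairwise (Disjoint on S)) (hTd : Pairwise (Disjoint on T)) :
    (⋃ p ∈ s, S p.1 ×ˢ T p.2).ncard = ∑ p ∈ s, (S p.1).ncard * (T p.2).ncard := by
  rw [← Finset.set_biUnion_coe, Set.Finite.ncard_biUnion s.finite_toSet
    (fun p _ => (hS p.1).prod (hT p.2)), finsum_mem_coe_finset]
  · simp_rw [Set.ncard_prod]
  · intro p _ p' _ hp
    by_cases h : p.1 = p'.1
    · exact Set.disjoint_prod.mpr (.inr (hTd fun h' => hp (Prod.ext h h')))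
    · exact Set.disjoint_prod.mpr (.inl (hSd h))

theorem sum_map_add_const (l : List ℕ) (c : ℕ) : (l.map (· + c)).sum = l.sum + l.length * c := by
  simp [List.sum_map_add, List.map_const', List.sum_replicate]

theorem map_sub_add_cancel {l : List ℕ} {c : ℕ} (h : ∀ x ∈ l, c ≤ x) :
    (l.map (· - c)).map (· + c) = l := by
  rw [List.map_map]
  conv_rhs => rw [← List.map_id l]
  exact List.map_congr_left fun x hx => Nat.sub_add_cancel (h x hx)

theorem IsPartitionOf.length_le {n : ℕ} {l : List ℕ} (h : IsPartitionOf n l) : l.length ≤ n :=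
  h.2.2 ▸ List.length_le_sum_of_one_le l h.2.1

theorem finite_setOf_isPartitionOf (n : ℕ) : {l : List ℕ | IsPartitionOf n l}.Finite := by
  rw [← Set.finite_coe_iff]
  refine Finite.of_injective (fun l : {l // IsPartitionOf n l} =>
    (⟨l.1, fun hi => l.2.2.1 _ (by exact_mod_cast hi), by simpa using l.2.2.2⟩ : n.Partition)) ?_
  rintro ⟨l₁, hl₁⟩ ⟨l₂, hl₂⟩ h
  simp only [Nat.Partition.mk.injEq, Multiset.coe_eq_coe] at h
  exact Subtype.ext (h.eq_of_pairwise (fun _ _ _ _ h₁ h₂ => le_antisymm h₂ h₁) hl₁.1 hl₂.1)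

def partsLe (j m : ℕ) : Set (List ℕ) := {l | IsPartitionOf m l ∧ ∀ x ∈ l, x ≤ j}

theorem finite_partsLe (j m : ℕ) : (partsLe j m).Finite :=
  (finite_setOf_isPartitionOf m).subset fun _ hl => hl.1

theorem pairwise_disjoint_partsLe (j : ℕ) : Pairwise (Disjoint on partsLe j) :=
  fun _ _ hab => Set.disjoint_left.mpr fun _ ha hb => hab (ha.1.2.2.symm.trans hb.1.2.2)

theorem partsLe_zero (m : ℕ) : partsLe 0 m = if m = 0 then {[]} else ∅ := by
  ext l
  rcases l with _ | ⟨a, t⟩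
  · split_ifs <;> simp_all [partsLe, IsPartitionOf, eq_comm]
  · split_ifs <;> simp [partsLe, IsPartitionOf] <;> omega

theorem partsLe_succ_sdiff (j m : ℕ) : partsLe (j + 1) m \ {l | j + 1 ∈ l} = partsLe j m := by
  ext l
  simp only [partsLe, Set.mem_sdiff, Set.mem_ofPred_eq]
  constructor
  · rintro ⟨⟨hl, hle⟩, hj⟩
    exact ⟨hl, fun x hx => Nat.le_of_lt_succ ((hle x hx).lt_of_ne (by rintro rfl; exact hj hx))⟩
  · rintro ⟨hl, hle⟩
    exact ⟨⟨hl, fun x hx => (hle x hx).trans j.le_succ⟩, fun hj => by have := hle _ hj; omega⟩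

theorem partsLe_succ_add_inter (j m : ℕ) :
    partsLe (j + 1) (m + (j + 1)) ∩ {l | j + 1 ∈ l} = List.cons (j + 1) '' partsLe (j + 1) m := by
  ext l
  constructor
  · rintro ⟨⟨⟨hs, hpos, hsum⟩, hle⟩, hj⟩
    obtain ⟨a, t, rfl⟩ := List.exists_cons_of_ne_nil (List.ne_nil_of_mem hj)
    rw [List.pairwise_cons] at hs
    have ha : a = j + 1 := by
      rcases List.mem_cons.mp hj with h | h
      · exact h.symm
      · exact le_antisymm (hle a List.mem_cons_self) (hs.1 _ h)
    subst ha
    refine ⟨t, ⟨⟨hs.2, fun x hx => hpos x (.tail _ hx), ?_⟩, fun x hx => hle x (.tail _ hx)⟩, rfl⟩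
    simp only [List.sum_cons] at hsum
    omega
  · rintro ⟨t, ⟨⟨hs, hpos, hsum⟩, hle⟩, rfl⟩
    refine ⟨⟨⟨List.pairwise_cons.mpr ⟨hle, hs⟩, ?_, by simp [hsum, add_comm]⟩, ?_⟩,
      List.mem_cons_self⟩
    · simpa using hpos
    · simpa using hle

theorem partsLe_inter_eq_empty {j m : ℕ} (h : m < j) : partsLe j m ∩ {l | j ∈ l} = ∅ := by
  ext l
  simp only [Set.mem_inter_iff, Set.mem_ofPred_eq, Set.mem_empty_iff_false, iff_false]
  rintro ⟨⟨⟨-, -, rfl⟩, -⟩, hj⟩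
  exact h.not_ge (List.le_sum_of_mem hj)

theorem ncard_partsLe_zero (m : ℕ) : (partsLe 0 m).ncard = if m = 0 then 1 else 0 := by
  rw [partsLe_zero]; split_ifs <;> simp

theorem ncard_partsLe_succ (j m : ℕ) : (partsLe (j + 1) m).ncard =
    (partsLe j m).ncard + if j + 1 ≤ m then (partsLe (j + 1) (m - (j + 1))).ncard else 0 := by
  rw [← Set.ncard_inter_add_ncard_sdiff_eq_ncard _ {l | j + 1 ∈ l} (finite_partsLe _ _),
    partsLe_succ_sdiff, add_comm]
  congr 1
  split_ifs with h
  · obtain ⟨m, rfl⟩ := Nat.exists_eq_add_of_le' h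
    rw [Nat.add_sub_cancel, partsLe_succ_add_inter,
      Set.ncard_image_of_injective _ List.cons_injective]
  · rw [partsLe_inter_eq_empty (not_le.mp h), Set.ncard_empty]

/-- Partitions of `m` into at most `j` parts, padded with zeros to length `j`. -/
def paddedPartitions (j m : ℕ) : Set (List ℕ) := {l | l.Pairwise (· ≥ ·) ∧ l.length = j ∧ l.sum = m}

theorem finite_paddedPartitions (j m : ℕ) : (paddedPartitions j m).Finite := by
  refine (Set.finite_range fun v : Fin j → Fin (m + 1) => List.ofFn fun i => (v i : ℕ)).subset ?_
  rintro l ⟨-, rfl, rfl⟩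
  exact ⟨fun i => ⟨l[i], Nat.lt_succ_of_le (List.le_sum_of_mem (List.getElem_mem _))⟩,
    List.ofFn_getElem⟩

theorem pairwise_disjoint_paddedPartitions (j : ℕ) : Pairwise (Disjoint on paddedPartitions j) :=
  fun _ _ hab => Set.disjoint_left.mpr fun _ ha hb => hab (ha.2.2.symm.trans hb.2.2)

theorem paddedPartitions_zero (m : ℕ) : paddedPartitions 0 m = if m = 0 then {[]} else ∅ := by
  ext l
  split_ifs with h <;> simp [paddedPartitions, h, eq_comm]
  · exact ⟨fun h => h.2.1, by rintro rfl; simp⟩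
  · rintro - rfl; simpa using h

theorem paddedPartitions_succ_inter (j m : ℕ) :
    paddedPartitions (j + 1) m ∩ {l | 0 ∈ l} = (· ++ [0]) '' paddedPartitions j m := by
  ext l
  constructor
  · rintro ⟨⟨hs, hlen, hsum⟩, h0⟩
    obtain ⟨t, a, rfl⟩ := (List.eq_nil_or_concat' l).resolve_left (by rintro rfl; simp at hlen)
    have ha : a = 0 := by
      rcases List.mem_append.mp h0 with h | h
      · exact Nat.le_zero.mp ((List.pairwise_append.mp hs).2.2 0 h a (List.mem_singleton_self a))
      · exact (List.mem_singleton.mp h).symm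
    subst ha
    exact ⟨t, ⟨hs.sublist (List.sublist_append_left _ _), by simpa using hlen,
      by simpa using hsum⟩, rfl⟩
  · rintro ⟨t, ⟨hs, rfl, rfl⟩, rfl⟩
    exact ⟨⟨List.pairwise_append.mpr ⟨hs, by simp, by simp⟩, by simp, by simp⟩, by simp⟩

theorem paddedPartitions_add_sdiff (j m : ℕ) :
    paddedPartitions j (m + j) \ {l | 0 ∈ l} = List.map (· + 1) '' paddedPartitions j m := by
  ext l
  constructor
  · rintro ⟨⟨hs, rfl, hsum⟩, h0⟩
    have hpos : ∀ x ∈ l, 1 ≤ x := fun x hx => Nat.pos_of_ne_zero fun hx0 => h0 (hx0 ▸ hx)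
    have hl := map_sub_add_cancel hpos
    refine ⟨l.map (· - 1), ⟨hs.map _ fun a b h => by omega, List.length_map _, ?_⟩, hl⟩
    have := sum_map_add_const (l.map (· - 1)) 1
    rw [hl, hsum, List.length_map] at this
    omega
  · rintro ⟨t, ⟨hs, rfl, rfl⟩, rfl⟩
    exact ⟨⟨hs.map _ fun a b h => by omega, List.length_map _, by simp⟩, by simp⟩

theorem paddedPartitions_sdiff_eq_empty {j m : ℕ} (h : m < j) :
    paddedPartitions j m \ {l | 0 ∈ l} = ∅ := by
  ext l
  simp only [Set.mem_sdiff, Set.mem_ofPred_eq, Set.mem_empty_iff_false, iff_false, not_and, not_not]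
  rintro ⟨-, rfl, rfl⟩
  contrapose! h
  exact List.length_le_sum_of_one_le l fun x hx => Nat.pos_of_ne_zero fun hx0 => h (hx0 ▸ hx)

theorem ncard_paddedPartitions_zero (m : ℕ) :
    (paddedPartitions 0 m).ncard = if m = 0 then 1 else 0 := by
  rw [paddedPartitions_zero]; split_ifs <;> simp

theorem ncard_paddedPartitions_succ (j m : ℕ) : (paddedPartitions (j + 1) m).ncard =
    (paddedPartitions j m).ncard +
      if j + 1 ≤ m then (paddedPartitions (j + 1) (m - (j + 1))).ncard else 0 := by
  rw [← Set.ncard_inter_add_ncard_sdiff_eq_ncard _ {l | 0 ∈ l} (finite_paddedPartitions _ _),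
    paddedPartitions_succ_inter, Set.ncard_image_of_injective _ (List.append_left_injective _)]
  congr 1
  split_ifs with h
  · obtain ⟨m, rfl⟩ := Nat.exists_eq_add_of_le' h
    rw [Nat.add_sub_cancel, paddedPartitions_add_sdiff,
      Set.ncard_image_of_injective _ (List.map_injective_iff.mpr (add_left_injective 1))]
  · rw [paddedPartitions_sdiff_eq_empty (not_le.mp h), Set.ncard_empty]

theorem constantCoeff_qPoch (j : ℕ) : constantCoeff (qPoch j) = 1 := by
  simp [qPoch, map_prod]

theorem invOfUnit_one_eq_of_mul_eq_one {R : Type*} [CommRing R] {φ ψ : R⟦X⟧}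
    (hφ : constantCoeff φ = 1) (h : φ * ψ = 1) : φ.invOfUnit 1 = ψ :=
  left_inv_eq_right_inv (by rw [mul_comm]; exact mul_invOfUnit φ 1 (by simpa using hφ)) h

theorem qPoch_mul_mk_eq_one (p : ℕ → ℕ → ℕ) (hzero : ∀ m, p 0 m = if m = 0 then 1 else 0)
    (hsucc : ∀ j m, p (j + 1) m = p j m + if j + 1 ≤ m then p (j + 1) (m - (j + 1)) else 0)
    (j : ℕ) : qPoch j * mk (fun m => (p j m : ℤ)) = 1 := by
  induction j with
  | zero =>
    ext m
    simp [qPoch, hzero, coeff_one]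
  | succ j ih =>
    have hstep : (1 - X ^ (j + 1)) * mk (fun m => (p (j + 1) m : ℤ)) =
        mk (fun m => (p j m : ℤ)) := by
      ext m
      rw [sub_mul, one_mul, map_sub, coeff_X_pow_mul', coeff_mk, coeff_mk, hsucc]
      split_ifs <;> simp
    rw [qPoch, Finset.prod_range_succ, ← qPoch, mul_assoc, hstep, ih]

theorem invOfUnit_qPoch_eq_mk_ncard_partsLe (j : ℕ) :
    (qPoch j).invOfUnit 1 = mk fun m => ((partsLe j m).ncard : ℤ) :=
  invOfUnit_one_eq_of_mul_eq_one (constantCoeff_qPoch j)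
    (qPoch_mul_mk_eq_one (fun j m => (partsLe j m).ncard) ncard_partsLe_zero ncard_partsLe_succ j)

theorem invOfUnit_qPoch_eq_mk_ncard_paddedPartitions (j : ℕ) :
    (qPoch j).invOfUnit 1 = mk fun m => ((paddedPartitions j m).ncard : ℤ) :=
  invOfUnit_one_eq_of_mul_eq_one (constantCoeff_qPoch j)
    (qPoch_mul_mk_eq_one (fun j m => (paddedPartitions j m).ncard)
      ncard_paddedPartitions_zero ncard_paddedPartitions_succ j)

theorem coeff_X_pow_mul_invOfUnit_qPoch_mul_invOfUnit_qPoch (e a b n : ℕ) :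
    coeff n ((X : ℤ⟦X⟧) ^ e * (qPoch a).invOfUnit 1 * (qPoch b).invOfUnit 1) =
      if e ≤ n then ∑ p ∈ antidiagonal (n - e),
        ((partsLe a p.1).ncard * (paddedPartitions b p.2).ncard : ℤ) else 0 := by
  rw [invOfUnit_qPoch_eq_mk_ncard_partsLe, invOfUnit_qPoch_eq_mk_ncard_paddedPartitions,
    mul_assoc, coeff_X_pow_mul', coeff_mul]
  simp only [coeff_mk]

/-- The index `r` is 0-based: these are the partitions of `n` with `λ_{r+1} = (r + 1) + k`. -/
def partitionsFixedAt (k n r : ℕ) : Set (List ℕ) :=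
  {l | IsPartitionOf n l ∧ ∃ h : r < l.length, l[r] = r + 1 + k}

theorem hasKFixedPoint_iff (k : ℕ) (l : List ℕ) :
    HasKFixedPoint k l ↔ ∃ r, ∃ h : r < l.length, l[r] = r + 1 + k := by
  constructor
  · rintro ⟨⟨r, hr⟩, h⟩
    exact ⟨r, hr, by exact_mod_cast h⟩
  · rintro ⟨r, hr, h⟩
    exact ⟨⟨r, hr⟩, by simp [h]⟩

theorem eq_of_getElem_eq_add_of_pairwise {l : List ℕ} (hl : l.Pairwise (· ≥ ·)) {c r s : ℕ}
    {hr : r < l.length} {hs : s < l.length} (hr' : l[r] = r + c) (hs' : l[s] = s + c) :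
    r = s := by
  have hle := fun a b ha hb hab => List.pairwise_iff_getElem.mp hl a b ha hb hab
  rcases lt_trichotomy r s with h | h | h
  · have := hle r s hr hs h; omega
  · exact h
  · have := hle s r hs hr h; omega

theorem setOf_hasKFixedPoint_eq_biUnion (k n : ℕ) :
    {l | IsPartitionOf n l ∧ HasKFixedPoint k l} =
      ⋃ r ∈ (Finset.range n : Set ℕ), partitionsFixedAt k n r := by
  ext l
  simp only [hasKFixedPoint_iff, partitionsFixedAt, Set.mem_ofPred_eq, Set.mem_iUnion,
    Finset.coe_range, Set.mem_Iio, exists_prop]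
  constructor
  · rintro ⟨hl, r, hr, h⟩
    exact ⟨r, hr.trans_le (IsPartitionOf.length_le hl), hl, hr, h⟩
  · rintro ⟨r, -, hl, hr, h⟩
    exact ⟨hl, r, hr, h⟩

theorem pairwiseDisjoint_partitionsFixedAt (k n : ℕ) (s : Set ℕ) :
    s.PairwiseDisjoint (partitionsFixedAt k n) := by
  intro r _ s _ hrs
  refine Set.disjoint_left.mpr fun l ⟨hl, hr, hr'⟩ ⟨_, hs, hs'⟩ => hrs ?_
  exact eq_of_getElem_eq_add_of_pairwise hl.1 (hr'.trans (add_assoc _ _ _))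
    (hs'.trans (add_assoc _ _ _))

theorem fk_eq_sum_ncard_partitionsFixedAt (k n : ℕ) :
    fk k n = ∑ r ∈ Finset.range n, (partitionsFixedAt k n r).ncard := by
  rw [fk, setOf_hasKFixedPoint_eq_biUnion, Set.Finite.ncard_biUnion (Finset.finite_toSet _)
    (fun r _ => (finite_setOf_isPartitionOf n).subset fun _ hl => hl.1)
    (pairwiseDisjoint_partitionsFixedAt k n _), finsum_mem_coe_finset]

def assemble (c : ℕ) (q : List ℕ × List ℕ) : List ℕ := q.2.map (· + c) ++ c :: q.1

theorem sum_assemble (c : ℕ) (q : List ℕ × List ℕ) :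
    (assemble c q).sum = q.1.sum + q.2.sum + (q.2.length + 1) * c := by
  simp only [assemble, List.sum_append, List.sum_cons, sum_map_add_const]
  ring

theorem injOn_assemble (c r : ℕ) : Set.InjOn (assemble c) {q | q.2.length = r} := by
  rintro ⟨μ, ν⟩ hν ⟨μ', ν'⟩ hν' h
  obtain ⟨h₁, h₂⟩ := List.append_inj h (by simp_all)
  exact Prod.ext (List.cons_injective h₂) (List.map_injective_iff.mpr (add_left_injective c) h₁)

theorem assemble_mem_partitionsFixedAt {k r a b : ℕ} {μ ν : List ℕ}
    (hμ : μ ∈ partsLe (r + 1 + k) a) (hν : ν ∈ paddedPartitions r b) :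
    assemble (r + 1 + k) (μ, ν) ∈ partitionsFixedAt k (a + b + (r + 1) * (r + 1 + k)) r := by
  obtain ⟨⟨hμs, hμpos, rfl⟩, hμle⟩ := hμ
  obtain ⟨hνs, rfl, rfl⟩ := hν
  refine ⟨⟨?_, ?_, by rw [sum_assemble]⟩, by simp [assemble], ?_⟩
  · refine List.pairwise_append.mpr ⟨hνs.map _ fun _ _ h => by omega,
      List.pairwise_cons.mpr ⟨hμle, hμs⟩, ?_⟩
    simp only [List.mem_map, List.mem_cons]
    rintro _ ⟨x, -, rfl⟩ y (rfl | hy)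
    · omega
    · have := hμle y hy; omega
  · intro x hx
    simp only [assemble, List.mem_append, List.mem_map, List.mem_cons] at hx
    rcases hx with ⟨y, -, rfl⟩ | rfl | hx
    · omega
    · omega
    · exact hμpos x hx
  · simp [assemble, List.getElem_append_right]

theorem exists_assemble_eq {k n r : ℕ} {l : List ℕ} (hl : l ∈ partitionsFixedAt k n r) :
    ∃ q : List ℕ × List ℕ, q.1 ∈ partsLe (r + 1 + k) q.1.sum ∧
      q.2 ∈ paddedPartitions r q.2.sum ∧ assemble (r + 1 + k) q = l ∧
      q.1.sum + q.2.sum + (r + 1) * (r + 1 + k) = n := by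
  obtain ⟨⟨hs, hpos, hsum⟩, hr, hc⟩ := hl
  set c := r + 1 + k
  have hsplit : l = l.take r ++ c :: l.drop (r + 1) := by
    rw [← hc, ← List.drop_eq_getElem_cons hr, List.take_append_drop]
  rw [hsplit, List.pairwise_append, List.pairwise_cons] at hs
  obtain ⟨hsTake, ⟨hDropLe, hsDrop⟩, hsCross⟩ := hs
  have hTake : ∀ x ∈ l.take r, c ≤ x := fun x hx => hsCross x hx c List.mem_cons_self
  refine ⟨(l.drop (r + 1), (l.take r).map (· - c)),
    ⟨⟨hsDrop, fun x hx => hpos x (List.mem_of_mem_drop hx), rfl⟩, hDropLe⟩,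
    ⟨hsTake.map _ fun _ _ h => by omega, by simp [hr.le], rfl⟩, ?_⟩
  have hl : assemble c (l.drop (r + 1), (l.take r).map (· - c)) = l := by
    rw [assemble, map_sub_add_cancel hTake]
    exact hsplit.symm
  refine ⟨hl, ?_⟩
  have h := sum_assemble c (l.drop (r + 1), (l.take r).map (· - c))
  rw [hl, hsum, List.length_map, List.length_take_of_le hr.le] at h
  exact h.symm

theorem partitionsFixedAt_eq_image {k n r : ℕ} (h : (r + 1) * (r + 1 + k) ≤ n) :
    partitionsFixedAt k n r = assemble (r + 1 + k) ''
      ⋃ p ∈ antidiagonal (n - (r + 1) * (r + 1 + k)),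
        partsLe (r + 1 + k) p.1 ×ˢ paddedPartitions r p.2 := by
  ext l
  constructor
  · intro hl
    obtain ⟨q, hq₁, hq₂, rfl, hsum⟩ := exists_assemble_eq hl
    refine ⟨q, Set.mem_biUnion (x := (q.1.sum, q.2.sum)) ?_ ⟨hq₁, hq₂⟩, rfl⟩
    rw [Finset.mem_coe, mem_antidiagonal]
    omega
  · rintro ⟨⟨μ, ν⟩, hq, rfl⟩
    simp only [Set.mem_iUnion, mem_antidiagonal] at hq
    obtain ⟨⟨a, b⟩, hab, hμ, hν⟩ := hq
    have := assemble_mem_partitionsFixedAt hμ hν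
    rwa [show a + b + (r + 1) * (r + 1 + k) = n by omega] at this

theorem partitionsFixedAt_eq_empty {k n r : ℕ} (h : n < (r + 1) * (r + 1 + k)) :
    partitionsFixedAt k n r = ∅ :=
  Set.eq_empty_of_forall_notMem fun _ hl => by
    obtain ⟨q, -, -, -, hsum⟩ := exists_assemble_eq hl
    omega

theorem ncard_partitionsFixedAt (k n r : ℕ) : (partitionsFixedAt k n r).ncard =
    if (r + 1) * (r + 1 + k) ≤ n then
      ∑ p ∈ antidiagonal (n - (r + 1) * (r + 1 + k)),
        (partsLe (r + 1 + k) p.1).ncard * (paddedPartitions r p.2).ncard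
    else 0 := by
  split_ifs with h
  · have hsub : (⋃ p ∈ antidiagonal (n - (r + 1) * (r + 1 + k)),
        partsLe (r + 1 + k) p.1 ×ˢ paddedPartitions r p.2) ⊆ {q | q.2.length = r} := by
      intro q hq
      obtain ⟨p, -, -, hν⟩ := Set.mem_iUnion₂.mp hq
      exact hν.2.1
    rw [partitionsFixedAt_eq_image h, ((injOn_assemble _ r).mono hsub).ncard_image,
      ncard_biUnion_prod _ (finite_partsLe _) (finite_paddedPartitions r)
        (pairwise_disjoint_partsLe _) (pairwise_disjoint_paddedPartitions r)]
  · rw [partitionsFixedAt_eq_empty (not_le.mp h), Set.ncard_empty]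

end KFixedPoint

theorem stmt11 (k : ℕ) (n : ℕ) :
    (fk (k : ℤ) n : ℤ) = ∑ i ∈ Finset.Icc 1 n, (PowerSeries.coeff n)
      ((PowerSeries.X : PowerSeries ℤ) ^ (i * (i + k)) *
        (qPoch (i + k)).invOfUnit 1 * (qPoch (i - 1)).invOfUnit 1) := by
  rw [KFixedPoint.fk_eq_sum_ncard_partitionsFixedAt, Nat.cast_sum, ← Finset.Ico_add_one_right_eq_Icc,
    Finset.sum_Ico_eq_sum_range, Nat.add_sub_cancel]
  refine Finset.sum_congr rfl fun r _ => ?_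
  rw [add_comm 1 r, KFixedPoint.ncard_partitionsFixedAt,
    KFixedPoint.coeff_X_pow_mul_invOfUnit_qPoch_mul_invOfUnit_qPoch, Nat.add_sub_cancel]
  push_cast
  rfl
end

section
/- For every integer k ≥ 0, as formal power series in q, Σ_{n≥0} g_k(n) q^n = Σ_{i≥0} q^{i²+ik+i} / ((q;q)_{i+k} (q;q)_i), where the right-hand side converges coefficientwise (the term for index i has lowest degree i²+ik+i). -/
/-!
If `λ` has no `k`-fixed point, let `i` be the least index with `λ_{i+1} ≤ i + k` (parts beyond the
length being `0`). Then `λ_i > i - 1 + k`, and `λ_i ≠ i + k` forces `λ_i ≥ i + k + 1`; since `λ` is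
nonincreasing, its first `i` parts are `≥ i + k + 1` and the others are `≤ i + k`. Conversely such a
partition has no `k`-fixed point, and it determines `i`. Removing the `i × (i + k + 1)` rectangle
from its Young diagram leaves a partition into at most `i` parts (right of the rectangle) and one
into parts `≤ i + k` (below it). Their generating functions `1 / (q;q)_i` and `1 / (q;q)_{i+k}`
come from the recursions obtained by removing a part `j + 1`, resp. a column of height `j + 1`.
-/

open Finset PowerSeries Function

lemma Set.ncard_biUnion_finset {ι α : Type*} (s : Finset ι) {t : ι → Set α}
    (ht : ∀ i ∈ s, (t i).Finite) (hdisj : (s : Set ι).PairwiseDisjoint t) :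
    (⋃ i ∈ s, t i).ncard = ∑ i ∈ s, (t i).ncard := by
  rw [← Finset.set_biUnion_coe, s.finite_toSet.ncard_biUnion ht hdisj, finsum_mem_coe_finset]

lemma ncard_biUnion_antidiagonal_prod {α β : Type*} {A : ℕ → Set α} {B : ℕ → Set β}
    (hA : ∀ a, (A a).Finite) (hB : ∀ b, (B b).Finite) (hdisj : Pairwise (Disjoint on A))
    (m : ℕ) : (⋃ p ∈ antidiagonal m, A p.1 ×ˢ B p.2).ncard =
      ∑ p ∈ antidiagonal m, (A p.1).ncard * (B p.2).ncard := by
  simp_rw [← Set.ncard_prod]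
  refine Set.ncard_biUnion_finset _ (fun p _ => (hA p.1).prod (hB p.2)) fun p hp p' hp' hne => ?_
  refine Set.disjoint_prod.mpr (Or.inl (hdisj fun h1 => hne ?_))
  rw [Finset.mem_coe, HasAntidiagonal.mem_antidiagonal] at hp hp'
  exact Prod.ext h1 (by omega)

lemma List.getElem_mem_take_of_lt {α : Type*} {l : List α} {i j : ℕ} (hj : j < l.length)
    (h : j < i) : l[j] ∈ l.take i :=
  List.mem_take_iff_getElem.mpr ⟨j, by omega, rfl⟩

lemma List.getElem_mem_drop_of_le {α : Type*} {l : List α} {i j : ℕ} (hj : j < l.length)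
    (h : i ≤ j) : l[j] ∈ l.drop i :=
  List.mem_drop_iff_getElem.mpr ⟨j - i, by omega, by simp only [Nat.add_sub_cancel' h]⟩

namespace IsPartitionOf

variable {n : ℕ} {l : List ℕ}

lemma nil_iff : IsPartitionOf n [] ↔ n = 0 := by
  simp [IsPartitionOf, eq_comm]

lemma le_of_mem (hl : IsPartitionOf n l) {x : ℕ} (hx : x ∈ l) : x ≤ n :=
  hl.2.2 ▸ List.le_sum_of_mem hx

lemma length_le (hl : IsPartitionOf n l) : l.length ≤ n :=
  hl.2.2 ▸ List.length_le_sum_of_one_le l hl.2.1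

lemma of_sublist (hl : IsPartitionOf n l) {l' : List ℕ} (h : l'.Sublist l) :
    IsPartitionOf l'.sum l' :=
  ⟨hl.1.sublist h, fun x hx => hl.2.1 x (h.subset hx), rfl⟩

lemma append {m : ℕ} {l' : List ℕ} (hl : IsPartitionOf n l) (hl' : IsPartitionOf m l')
    (h : ∀ x ∈ l, ∀ y ∈ l', y ≤ x) : IsPartitionOf (n + m) (l ++ l') := by
  refine ⟨List.pairwise_append.mpr ⟨hl.1, hl'.1, h⟩, ?_, by rw [List.sum_append, hl.2.2, hl'.2.2]⟩
  simpa only [List.mem_append, or_imp, forall_and] using ⟨hl.2.1, hl'.2.1⟩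

lemma cons_iff {a : ℕ} : IsPartitionOf n (a :: l) ↔
    (∀ y ∈ l, y ≤ a) ∧ 0 < a ∧ a ≤ n ∧ IsPartitionOf (n - a) l := by
  simp only [IsPartitionOf, List.pairwise_cons, List.mem_cons, forall_eq_or_imp, List.sum_cons]
  constructor
  · rintro ⟨⟨hle, hs⟩, ⟨ha, hpos⟩, hsum⟩
    exact ⟨hle, ha, by omega, hs, hpos, by omega⟩
  · rintro ⟨hle, ha, han, hs, hpos, hsum⟩
    exact ⟨⟨hle, hs⟩, ⟨ha, hpos⟩, by omega⟩

lemma getElem_le_getElem (hl : IsPartitionOf n l) {a b : ℕ} (hab : a ≤ b) (hb : b < l.length) :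
    l[b] ≤ l[a] :=
  hl.1.rel_get_of_le (a := ⟨a, by omega⟩) (b := ⟨b, hb⟩) hab

end IsPartitionOf

lemma setOf_isPartitionOf_finite (n : ℕ) : {l : List ℕ | IsPartitionOf n l}.Finite := by
  refine ((List.finite_length_le (Fin (n + 1)) n).image (List.map Fin.val)).subset fun l hl => ?_
  refine ⟨l.map (Fin.ofNat (n + 1)), by simpa using hl.length_le, ?_⟩
  rw [List.map_map]
  conv_rhs => rw [← List.map_id l]
  exact List.map_congr_left fun x hx => Nat.mod_eq_of_lt (Nat.lt_succ_of_le (hl.le_of_mem hx))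

/-- Puts an `m × c` rectangle to the left of the diagram of `α`, which should have at most `m`
parts. -/
def addRect (c m : ℕ) (α : List ℕ) : List ℕ := α.map (· + c) ++ List.replicate (m - α.length) c

def subRect (c : ℕ) (l : List ℕ) : List ℕ := (l.map (· - c)).filter (· ≠ 0)

section Rect

variable {c m n : ℕ} {α l : List ℕ}

lemma length_addRect (h : α.length ≤ m) : (addRect c m α).length = m := by
  simp only [addRect, List.length_append, List.length_map, List.length_replicate]
  omega

lemma le_of_mem_addRect {x : ℕ} (hx : x ∈ addRect c m α) : c ≤ x := by
  simp only [addRect, List.mem_append, List.mem_map, List.mem_replicate] at hx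
  omega

lemma addRect_cons (a : ℕ) : addRect c (m + 1) (a :: α) = (a + c) :: addRect c m α := by
  simp [addRect]

lemma IsPartitionOf.addRect (hα : IsPartitionOf n α) (hm : α.length ≤ m) (hc : 0 < c) :
    IsPartitionOf (n + m * c) (addRect c m α) := by
  refine ⟨List.pairwise_append.mpr ⟨?_, ?_, ?_⟩, fun x hx => hc.trans_le (le_of_mem_addRect hx), ?_⟩
  · exact List.pairwise_map.mpr (hα.1.imp fun h => by omega)
  · exact List.pairwise_replicate.mpr (Or.inr le_rfl)
  · simp only [List.mem_map, List.mem_replicate]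
    omega
  · rw [_root_.addRect, List.sum_append, List.sum_map_add, List.map_const', List.sum_replicate_nat,
      List.sum_replicate_nat, List.map_id', hα.2.2, add_assoc, ← add_mul,
      Nat.add_sub_cancel' hm]

lemma subRect_addRect (hα : ∀ x ∈ α, 0 < x) : subRect c (addRect c m α) = α := by
  simp only [subRect, addRect, List.map_append, List.map_map, List.map_replicate, Nat.sub_self,
    List.filter_append]
  simpa [Function.comp_def] using fun x hx => (hα x hx).ne'

lemma length_subRect_le (c : ℕ) (l : List ℕ) : (subRect c l).length ≤ l.length :=
  (List.length_filter_le _ _).trans_eq (List.length_map _)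

lemma subRect_cons_self : subRect c (c :: l) = subRect c l :=
  List.filter_cons_of_neg (by simp)

lemma subRect_cons_of_lt {a : ℕ} (ha : c < a) : subRect c (a :: l) = (a - c) :: subRect c l :=
  List.filter_cons_of_pos (by simpa using (Nat.sub_pos_of_lt ha).ne')

lemma sum_subRect (h : ∀ x ∈ l, c ≤ x) : (subRect c l).sum + l.length * c = l.sum := by
  induction l with
  | nil => simp [subRect]
  | cons a t ih =>
    simp only [List.mem_cons, forall_eq_or_imp] at h
    have := ih h.2
    rcases h.1.eq_or_lt with rfl | hlt
    · rw [subRect_cons_self, List.length_cons, List.sum_cons]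
      linarith
    · rw [subRect_cons_of_lt hlt, List.length_cons, List.sum_cons, List.sum_cons]
      have := Nat.sub_add_cancel hlt.le
      linarith

lemma subRect_replicate : subRect c (List.replicate m c) = [] := by
  simp [subRect]

lemma IsPartitionOf.subRect (hl : IsPartitionOf n l) (h : ∀ x ∈ l, c ≤ x) :
    IsPartitionOf (n - l.length * c) (subRect c l) := by
  refine ⟨(List.pairwise_map.mpr (hl.1.imp fun h => by omega)).filter _, ?_, ?_⟩
  · simp only [_root_.subRect, List.mem_filter]
    exact fun x hx => Nat.pos_of_ne_zero (by simpa using hx.2)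
  · have := sum_subRect h
    have := hl.2.2
    omega

lemma addRect_subRect (hl : l.Pairwise (· ≥ ·)) (h : ∀ x ∈ l, c ≤ x) :
    addRect c l.length (subRect c l) = l := by
  induction l with
  | nil => simp [addRect, subRect]
  | cons a t ih =>
    obtain ⟨hle, ht⟩ := List.pairwise_cons.mp hl
    simp only [List.mem_cons, forall_eq_or_imp] at h
    rcases h.1.eq_or_lt with hca | hlt
    · have hrep : a :: t = List.replicate (t.length + 1) c := by
        refine List.eq_replicate_iff.mpr ⟨rfl, ?_⟩
        simp only [List.mem_cons, forall_eq_or_imp]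
        exact ⟨hca.symm, fun y hy => le_antisymm ((hle y hy).trans hca.ge) (h.2 y hy)⟩
      rw [hrep, List.length_replicate, subRect_replicate]
      simp [addRect]
    · rw [subRect_cons_of_lt hlt, List.length_cons, addRect_cons, ih ht h.2,
        Nat.sub_add_cancel hlt.le]

end Rect

def partsLE (j n : ℕ) : Set (List ℕ) := {l | IsPartitionOf n l ∧ ∀ x ∈ l, x ≤ j}

def lengthLE (j n : ℕ) : Set (List ℕ) := {l | IsPartitionOf n l ∧ l.length ≤ j}

lemma partsLE_finite (j n : ℕ) : (partsLE j n).Finite :=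
  (setOf_isPartitionOf_finite n).subset fun _ hl => hl.1

lemma lengthLE_finite (j n : ℕ) : (lengthLE j n).Finite :=
  (setOf_isPartitionOf_finite n).subset fun _ hl => hl.1

lemma partsLE_pairwiseDisjoint (j : ℕ) : Pairwise (Disjoint on partsLE j) :=
  fun _ _ hne => Set.disjoint_left.mpr fun _ h h' => hne (h.1.2.2.symm.trans h'.1.2.2)

lemma ncard_setOf_isPartitionOf_nil (n : ℕ) :
    {l : List ℕ | IsPartitionOf n l ∧ l = []}.ncard = if n = 0 then 1 else 0 := by
  split_ifs with hn
  · subst hn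
    convert Set.ncard_singleton ([] : List ℕ)
    ext l
    simp +contextual [IsPartitionOf.nil_iff]
  · convert Set.ncard_empty (List ℕ)
    ext l
    simp only [Set.mem_ofPred_eq, Set.mem_empty_iff_false, iff_false, not_and]
    rintro hl rfl
    exact hn (IsPartitionOf.nil_iff.mp hl)

lemma ncard_partsLE_zero (n : ℕ) : (partsLE 0 n).ncard = if n = 0 then 1 else 0 := by
  rw [← ncard_setOf_isPartitionOf_nil]
  congr 1
  ext l
  refine and_congr_right fun hl => ⟨fun h => ?_, by rintro rfl; simp⟩
  exact List.eq_nil_iff_forall_not_mem.mpr fun x hx => (hl.2.1 x hx).ne' (Nat.le_zero.mp (h x hx))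

lemma ncard_lengthLE_zero (n : ℕ) : (lengthLE 0 n).ncard = if n = 0 then 1 else 0 := by
  rw [← ncard_setOf_isPartitionOf_nil]
  congr 1
  ext l
  simp [lengthLE]

lemma partsLE_succ {j n : ℕ} (h : j + 1 ≤ n) :
    partsLE (j + 1) n = partsLE j n ∪ List.cons (j + 1) '' partsLE (j + 1) (n - (j + 1)) := by
  ext l
  constructor
  · rintro ⟨hl, hle⟩
    cases l with
    | nil => exact Or.inl ⟨hl, by simp⟩
    | cons a t =>
      obtain ⟨hta, -, -, ht⟩ := IsPartitionOf.cons_iff.mp hl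
      simp only [List.mem_cons, forall_eq_or_imp] at hle
      by_cases ha : a ≤ j
      · exact Or.inl ⟨hl, by simpa using ⟨ha, fun y hy => (hta y hy).trans ha⟩⟩
      · obtain rfl : a = j + 1 := by omega
        exact Or.inr ⟨t, ⟨ht, hle.2⟩, rfl⟩
  · rintro (⟨hl, hle⟩ | ⟨t, ⟨ht, hle⟩, rfl⟩)
    · exact ⟨hl, fun x hx => (hle x hx).trans j.le_succ⟩
    · exact ⟨IsPartitionOf.cons_iff.mpr ⟨hle, j.succ_pos, h, ht⟩, by simpa using hle⟩

lemma lengthLE_succ {j n : ℕ} (h : j + 1 ≤ n) :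
    lengthLE (j + 1) n = lengthLE j n ∪ addRect 1 (j + 1) '' lengthLE (j + 1) (n - (j + 1)) := by
  ext l
  constructor
  · rintro ⟨hl, hlen⟩
    by_cases hj : l.length ≤ j
    · exact Or.inl ⟨hl, hj⟩
    · have hlen' : l.length = j + 1 := by omega
      have hsub := hl.subRect (c := 1) hl.2.1
      rw [hlen', mul_one] at hsub
      refine Or.inr ⟨subRect 1 l, ⟨hsub, (length_subRect_le 1 l).trans hlen⟩, ?_⟩
      rw [← hlen']
      exact addRect_subRect hl.1 hl.2.1
  · rintro (⟨hl, hlen⟩ | ⟨α, ⟨hα, hlen⟩, rfl⟩)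
    · exact ⟨hl, hlen.trans j.le_succ⟩
    · have hadd := hα.addRect hlen one_pos
      rw [mul_one, Nat.sub_add_cancel h] at hadd
      exact ⟨hadd, (length_addRect hlen).le⟩

lemma ncard_partsLE_succ (j n : ℕ) : (partsLE (j + 1) n).ncard =
    (partsLE j n).ncard + if j + 1 ≤ n then (partsLE (j + 1) (n - (j + 1))).ncard else 0 := by
  split_ifs with h
  · rw [partsLE_succ h, Set.ncard_union_eq _ (partsLE_finite j n) ((partsLE_finite _ _).image _),
      Set.ncard_image_of_injective _ List.cons_injective]
    refine Set.disjoint_left.mpr ?_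
    rintro _ ⟨-, hle⟩ ⟨t, -, rfl⟩
    simpa using hle (j + 1) List.mem_cons_self
  · rw [add_zero]
    congr 1
    ext l
    exact and_congr_right fun hl => forall₂_congr fun x hx => by
      have := hl.le_of_mem hx
      omega

lemma ncard_lengthLE_succ (j n : ℕ) : (lengthLE (j + 1) n).ncard =
    (lengthLE j n).ncard + if j + 1 ≤ n then (lengthLE (j + 1) (n - (j + 1))).ncard else 0 := by
  split_ifs with h
  · rw [lengthLE_succ h, Set.ncard_union_eq _ (lengthLE_finite j n) ((lengthLE_finite _ _).image _),
      Set.InjOn.ncard_image]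
    · intro α hα β hβ hαβ
      rw [← subRect_addRect (c := 1) (m := j + 1) hα.1.2.1, hαβ, subRect_addRect hβ.1.2.1]
    · refine Set.disjoint_left.mpr ?_
      rintro _ ⟨-, hlen⟩ ⟨α, ⟨-, hα⟩, rfl⟩
      rw [length_addRect hα] at hlen
      omega
  · rw [add_zero]
    congr 1
    ext l
    exact and_congr_right fun hl => by
      have := hl.length_le
      omega

lemma constantCoeff_qPoch (j : ℕ) : constantCoeff (qPoch j) = 1 := by
  simp [qPoch, map_prod]

lemma qPoch_succ (j : ℕ) : qPoch (j + 1) = qPoch j * (1 - X ^ (j + 1)) :=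
  Finset.prod_range_succ _ _

/-- `hsucc` is the coefficientwise form of `(1 - q^(j+1)) C_{j+1} = C_j` for the generating
functions `C_j = ∑ₙ c j n qⁿ`. -/
lemma invOfUnit_qPoch_eq_mk {c : ℕ → ℕ → ℕ} (hzero : ∀ n, c 0 n = if n = 0 then 1 else 0)
    (hsucc : ∀ j n, c (j + 1) n = c j n + if j + 1 ≤ n then c (j + 1) (n - (j + 1)) else 0)
    (j : ℕ) : (qPoch j).invOfUnit 1 = PowerSeries.mk fun n => (c j n : ℤ) := by
  suffices h : qPoch j * PowerSeries.mk (fun n => (c j n : ℤ)) = 1 from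
    left_inv_eq_right_inv (invOfUnit_mul _ _ (by simp [constantCoeff_qPoch])) h
  induction j with
  | zero =>
    ext n
    simp [qPoch, hzero, coeff_one]
  | succ j ih =>
    have hstep : (1 - X ^ (j + 1)) * PowerSeries.mk (fun n => (c (j + 1) n : ℤ)) =
        PowerSeries.mk fun n => (c j n : ℤ) := by
      ext n
      rw [sub_mul, one_mul, map_sub, coeff_X_pow_mul', coeff_mk, coeff_mk, hsucc]
      split_ifs <;> simp
    rw [qPoch_succ, mul_assoc, hstep, ih]

lemma invOfUnit_qPoch_eq_partsLE (j : ℕ) :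
    (qPoch j).invOfUnit 1 = PowerSeries.mk fun n => ((partsLE j n).ncard : ℤ) :=
  invOfUnit_qPoch_eq_mk (c := fun j n => (partsLE j n).ncard) ncard_partsLE_zero
    ncard_partsLE_succ j

lemma invOfUnit_qPoch_eq_lengthLE (j : ℕ) :
    (qPoch j).invOfUnit 1 = PowerSeries.mk fun n => ((lengthLE j n).ncard : ℤ) :=
  invOfUnit_qPoch_eq_mk (c := fun j n => (lengthLE j n).ncard) ncard_lengthLE_zero
    ncard_lengthLE_succ j

def rectClass (k i n : ℕ) : Set (List ℕ) :=
  {l | IsPartitionOf n l ∧ i ≤ l.length ∧ (∀ x ∈ l.take i, i + k + 1 ≤ x) ∧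
    ∀ x ∈ l.drop i, x ≤ i + k}

def glueRect (c i : ℕ) (q : List ℕ × List ℕ) : List ℕ := addRect c i q.2 ++ q.1

lemma glueRect_injOn (c i : ℕ) :
    Set.InjOn (glueRect c i) {q | (∀ x ∈ q.2, 0 < x) ∧ q.2.length ≤ i} := by
  rintro q ⟨hq, hqi⟩ q' ⟨hq', hqi'⟩ h
  obtain ⟨h2, h1⟩ := List.append_inj h (by rw [length_addRect hqi, length_addRect hqi'])
  exact Prod.ext h1 (by rw [← subRect_addRect (c := c) (m := i) hq, h2, subRect_addRect hq'])

lemma mul_le_of_mem_rectClass {k i n : ℕ} {l : List ℕ} (hl : l ∈ rectClass k i n) :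
    i * (i + k + 1) ≤ n := by
  obtain ⟨hp, hi, htake, -⟩ := hl
  have := List.card_nsmul_le_sum _ _ htake
  rw [List.length_take_of_le hi, smul_eq_mul] at this
  have := l.sum_take_add_sum_drop i
  have := hp.2.2
  omega

lemma rectClass_eq_image {k i n : ℕ} (h : i * (i + k + 1) ≤ n) :
    rectClass k i n = glueRect (i + k + 1) i ''
      ⋃ p ∈ antidiagonal (n - i * (i + k + 1)), partsLE (i + k) p.1 ×ˢ lengthLE i p.2 := by
  ext l
  simp only [Set.mem_image, Set.mem_iUnion, HasAntidiagonal.mem_antidiagonal, Set.mem_prod,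
    exists_prop]
  constructor
  · rintro ⟨hp, hi, htake, hdrop⟩
    have hlen := List.length_take_of_le hi
    have htake' := (hp.of_sublist (List.take_sublist i l)).subRect htake
    rw [hlen] at htake'
    have hrect := List.card_nsmul_le_sum _ _ htake
    rw [hlen, smul_eq_mul] at hrect
    have hsum := l.sum_take_add_sum_drop i
    have hn := hp.2.2
    refine ⟨(l.drop i, subRect (i + k + 1) (l.take i)),
      ⟨((l.drop i).sum, (l.take i).sum - i * (i + k + 1)), by omega, ?_, ?_⟩, ?_⟩
    · exact ⟨hp.of_sublist (List.drop_sublist i l), hdrop⟩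
    · exact ⟨htake', (length_subRect_le _ _).trans hlen.le⟩
    · have := addRect_subRect (hp.1.sublist (List.take_sublist i l)) htake
      rw [hlen] at this
      rw [glueRect, this, List.take_append_drop]
  · rintro ⟨q, ⟨p, hpn, ⟨hβ, hβk⟩, ⟨hα, hαi⟩⟩, rfl⟩
    have hlen := length_addRect (c := i + k + 1) hαi
    refine ⟨?_, ?_, ?_, ?_⟩
    · have := (hα.addRect (c := i + k + 1) hαi (Nat.succ_pos _)).append hβ fun x hx y hy => by
        have := le_of_mem_addRect hx
        have := hβk y hy
        omega
      rw [glueRect]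
      convert this using 1
      omega
    · simp [glueRect, hlen]
    · rw [glueRect, List.take_left' hlen]
      exact fun x hx => le_of_mem_addRect hx
    · rwa [glueRect, List.drop_left' hlen]

lemma ncard_rectClass (k i n : ℕ) : (rectClass k i n).ncard =
    if i * (i + k + 1) ≤ n then ∑ p ∈ antidiagonal (n - i * (i + k + 1)),
      (partsLE (i + k) p.1).ncard * (lengthLE i p.2).ncard else 0 := by
  split_ifs with h
  · rw [rectClass_eq_image h, Set.InjOn.ncard_image,
      ncard_biUnion_antidiagonal_prod (partsLE_finite _) (lengthLE_finite _)
        (partsLE_pairwiseDisjoint _)]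
    refine (glueRect_injOn _ _).mono ?_
    simp only [Set.iUnion_subset_iff]
    rintro p - q ⟨-, hq⟩
    exact ⟨hq.1.2.1, hq.2⟩
  · rw [Set.eq_empty_of_forall_notMem fun l hl => h (mul_le_of_mem_rectClass hl), Set.ncard_empty]

lemma not_hasKFixedPoint_of_mem_rectClass {k i n : ℕ} {l : List ℕ} (hl : l ∈ rectClass k i n) :
    ¬ HasKFixedPoint k l := by
  rintro ⟨⟨j, hj⟩, hfix⟩
  obtain ⟨-, -, htake, hdrop⟩ := hl
  have hfix' : l[j] = j + 1 + k := by
    rw [List.get_eq_getElem] at hfix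
    exact_mod_cast hfix
  rcases lt_or_ge j i with hji | hij
  · have := htake _ (List.getElem_mem_take_of_lt hj hji)
    omega
  · have := hdrop _ (List.getElem_mem_drop_of_le hj hij)
    omega

lemma rectClass_pairwiseDisjoint (k n : ℕ) : Pairwise (Disjoint on fun i => rectClass k i n) := by
  intro i i' hne
  wlog h : i < i' generalizing i i'
  · exact (this hne.symm (by omega)).symm
  refine Set.disjoint_left.mpr fun l ⟨_, _, _, hdrop⟩ ⟨_, hi', htake, _⟩ => ?_
  have := hdrop _ (List.getElem_mem_drop_of_le (by omega : i < l.length) le_rfl)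
  have := htake _ (List.getElem_mem_take_of_lt (by omega : i < l.length) h)
  omega

lemma exists_mem_rectClass {k n : ℕ} {l : List ℕ} (hl : IsPartitionOf n l)
    (hfix : ¬ HasKFixedPoint k l) : ∃ i, l ∈ rectClass k i n := by
  have hex : ∃ i, l.getD i 0 ≤ i + k := ⟨l.length, by simp⟩
  obtain ⟨i, hi, hi_min⟩ : ∃ i, l.getD i 0 ≤ i + k ∧ ∀ j < i, ¬ l.getD j 0 ≤ j + k :=
    ⟨Nat.find hex, Nat.find_spec hex, fun _ => Nat.find_min hex⟩
  have hi_len : i ≤ l.length := by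
    by_contra! h
    exact hi_min l.length h (by simp)
  refine ⟨i, hl, hi_len, fun x hx => ?_, fun x hx => ?_⟩
  · obtain ⟨j, hj, rfl⟩ := List.mem_take_iff_getElem.mp hx
    have hlt : i - 1 + k < l[i - 1] := by
      have := hi_min (i - 1) (by omega)
      rwa [List.getD_eq_getElem _ _ (by omega), not_le] at this
    have hne : l[i - 1] ≠ i + k := fun h =>
      hfix ⟨⟨i - 1, by omega⟩, by simp only [List.get_eq_getElem, h]; push_cast; omega⟩
    have := hl.getElem_le_getElem (show j ≤ i - 1 by omega) (by omega)
    omega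
  · obtain ⟨j, hj, rfl⟩ := List.mem_drop_iff_getElem.mp hx
    rw [List.getD_eq_getElem _ _ (by omega)] at hi
    have := hl.getElem_le_getElem (show i ≤ i + j by omega) (by omega)
    omega

lemma gk_eq_sum_ncard_rectClass (k n : ℕ) :
    gk k n = ∑ i ∈ range (n + 1), (rectClass k i n).ncard := by
  have hunion : {l | IsPartitionOf n l ∧ ¬ HasKFixedPoint k l} =
      ⋃ i ∈ range (n + 1), rectClass k i n := by
    ext l
    simp only [Set.mem_ofPred_eq, Set.mem_iUnion, mem_range, exists_prop]
    constructor
    · rintro ⟨hl, hfix⟩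
      obtain ⟨i, hi⟩ := exists_mem_rectClass hl hfix
      exact ⟨i, by have := hl.length_le; have := hi.2.1; omega, hi⟩
    · rintro ⟨i, -, hi⟩
      exact ⟨hi.1, not_hasKFixedPoint_of_mem_rectClass hi⟩
  rw [gk, hunion, Set.ncard_biUnion_finset _ (fun i _ => (setOf_isPartitionOf_finite n).subset
    fun _ hl => hl.1) fun i _ i' _ hne => rectClass_pairwiseDisjoint k n hne]

theorem stmt13 (k : ℕ) (n : ℕ) :
    (gk (k : ℤ) n : ℤ) = ∑ i ∈ Finset.range (n + 1), (PowerSeries.coeff n)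
      ((PowerSeries.X : PowerSeries ℤ) ^ (i * i + i * k + i) *
        (qPoch (i + k)).invOfUnit 1 * (qPoch i).invOfUnit 1) := by
  rw [gk_eq_sum_ncard_rectClass, Nat.cast_sum]
  refine sum_congr rfl fun i _ => ?_
  rw [invOfUnit_qPoch_eq_partsLE, invOfUnit_qPoch_eq_lengthLE, mul_assoc,
    show i * i + i * k + i = i * (i + k + 1) by ring, coeff_X_pow_mul', ncard_rectClass]
  split_ifs
  · simp [coeff_mul]
  · rfl
end
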